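/- arXiv:2305.05307 — 10 statements merged into one kernel-verified Lean document; each statement's English description precedes it below -/
import Mathlib

section
/- Let A be an n-by-n reciprocal matrix and w a positive n-vector. Then w is efficient for A if and only if the directed graph G(A,w) is strongly connected. -/
/-- A vector is positive if all its entries are positive. -/
def PosVec {ι : Type*} (w : ι → ℝ) : Prop := ∀ i, 0 < w i

/-- A reciprocal (pairwise comparison) matrix: positive entries with `A j i = 1 / A i j`. -/
def IsReciprocal {ι : Type*} (A : Matrix ι ι ℝ) : Prop :=
  (∀ i j, 0 < A i j) ∧ ∀ i j, A j i = 1 / A i j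

/-- A positive vector `w` is efficient for `A` if whenever a positive vector `v` satisfies the
entrywise inequalities `|A i j - v i / v j| ≤ |A i j - w i / w j|`, then `v` is a positive
scalar multiple of `w`. -/
def IsEfficient {ι : Type*} (A : Matrix ι ι ℝ) (w : ι → ℝ) : Prop :=
  PosVec w ∧ ∀ v : ι → ℝ, PosVec v →
    (∀ i j, |A i j - v i / v j| ≤ |A i j - w i / w j|) →
    ∃ c : ℝ, 0 < c ∧ v = c • w

/-- The edge relation of the digraph `G(A, w)`: an edge `i → j` (for `i ≠ j`) iff
`w i / w j ≥ A i j`. -/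
def GEdge {ι : Type*} (A : Matrix ι ι ℝ) (w : ι → ℝ) (i j : ι) : Prop :=
  i ≠ j ∧ A i j ≤ w i / w j

/-- Along an edge of `G(A,w)`, the ratio `v/w` is monotone for any competitor `v`. -/
lemma gedge_ratio_mono {n : ℕ} {A : Matrix (Fin n) (Fin n) ℝ} (hA : IsReciprocal A)
    {w v : Fin n → ℝ} (hw : PosVec w) (hv : PosVec v)
    (hineq : ∀ i j, |A i j - v i / v j| ≤ |A i j - w i / w j|)
    {i j : Fin n} (h : GEdge A w i j) : v i / w i ≤ v j / w j := by
  obtain ⟨hAp, hArec⟩ := hA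
  have hij := h.2
  have h1 : A j i = 1 / A i j := hArec i j
  have hwji : w j / w i ≤ A j i := by
    rw [h1, show w j / w i = 1 / (w i / w j) from (one_div_div _ _).symm]
    exact one_div_le_one_div_of_le (hAp i j) hij
  have h3 : A j i - v j / v i ≤ A j i - w j / w i := by
    calc A j i - v j / v i ≤ |A j i - v j / v i| := le_abs_self _
      _ ≤ |A j i - w j / w i| := hineq j i
      _ = A j i - w j / w i := abs_of_nonneg (by linarith)
  have h4 : w j / w i ≤ v j / v i := by linarith
  rw [div_le_div_iff₀ (hw i) (hv i)] at h4
  rw [div_le_div_iff₀ (hw i) (hw j)]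
  nlinarith [hv i, hv j, hw i, hw j]

lemma path_ratio_mono {n : ℕ} {A : Matrix (Fin n) (Fin n) ℝ} (hA : IsReciprocal A)
    {w v : Fin n → ℝ} (hw : PosVec w) (hv : PosVec v)
    (hineq : ∀ i j, |A i j - v i / v j| ≤ |A i j - w i / w j|)
    {i j : Fin n} (h : Relation.ReflTransGen (GEdge A w) i j) : v i / w i ≤ v j / w j := by
  induction h with
  | refl => exact le_refl _
  | tail _ he ih => exact ih.trans (gedge_ratio_mono hA hw hv hineq he)

/-- `w` is efficient for the reciprocal matrix `A` iff the digraph `G(A, w)`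
is strongly connected (between any two distinct vertices there is a directed path). -/
theorem efficient_iff_stronglyConnected {n : ℕ} (A : Matrix (Fin n) (Fin n) ℝ)
    (hA : IsReciprocal A) (w : Fin n → ℝ) (hw : PosVec w) :
    IsEfficient A w ↔
      ∀ i j : Fin n, i ≠ j → Relation.ReflTransGen (GEdge A w) i j := by
  classical
  obtain ⟨hAp, hArec⟩ := hA
  constructor
  · -- efficient → strongly connected
    intro hE i j hij
    by_contra hpath
    set S : Finset (Fin n) :=
      Finset.univ.filter (fun k => Relation.ReflTransGen (GEdge A w) i k) with hSdef
    have hiS : i ∈ S := by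
      simp only [hSdef, Finset.mem_filter, Finset.mem_univ, true_and]
      exact Relation.ReflTransGen.refl
    have hjS : j ∉ S := by
      simp only [hSdef, Finset.mem_filter, Finset.mem_univ, true_and]
      exact hpath
    have hcross : ∀ k ∈ S, ∀ l, l ∉ S → w k / w l < A k l := by
      intro k hk l hl
      have hne : k ≠ l := by rintro rfl; exact hl hk
      by_contra hle
      push_neg at hle
      refine hl ?_
      simp only [hSdef, Finset.mem_filter, Finset.mem_univ, true_and] at hk ⊢
      exact hk.tail ⟨hne, hle⟩
    set P : Finset (Fin n × Fin n) := S ×ˢ Sᶜ with hPdef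
    have hPne : P.Nonempty := ⟨(i, j), by simp [hPdef, hiS, hjS]⟩
    set t : ℝ := P.inf' hPne (fun p => A p.1 p.2 * w p.2 / w p.1) with htdef
    have ht1 : 1 < t := by
      rw [htdef, Finset.lt_inf'_iff]
      rintro ⟨k, l⟩ hkl
      simp only [hPdef, Finset.mem_product, Finset.mem_compl] at hkl
      have h1 := hcross k hkl.1 l hkl.2
      rw [lt_div_iff₀ (hw k)]
      rw [div_lt_iff₀ (hw l)] at h1
      linarith
    have ht0 : 0 < t := lt_trans one_pos ht1
    have ht_le : ∀ k ∈ S, ∀ l, l ∉ S → t * w k ≤ A k l * w l := by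
      intro k hk l hl
      have h1 : t ≤ A k l * w l / w k :=
        Finset.inf'_le _ (by simp [hPdef, hk, hl] : ((k, l) : Fin n × Fin n) ∈ P)
      rw [le_div_iff₀ (hw k)] at h1
      linarith
    set v : Fin n → ℝ := fun k => if k ∈ S then t * w k else w k with hvdef
    have hvpos : PosVec v := by
      intro k
      simp only [hvdef]
      split
      · exact mul_pos ht0 (hw k)
      · exact hw k
    have hineq : ∀ k l, |A k l - v k / v l| ≤ |A k l - w k / w l| := by
      intro k l
      by_cases hk : k ∈ S <;> by_cases hl : l ∈ S
      · have : v k / v l = w k / w l := by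
          simp only [hvdef, if_pos hk, if_pos hl]
          rw [mul_div_mul_left _ _ (ne_of_gt ht0)]
        rw [this]
      · -- k ∈ S, l ∉ S
        have hvr : v k / v l = t * w k / w l := by simp [hvdef, hk, hl]
        have hwlt : w k / w l < A k l := hcross k hk l hl
        have hub : t * w k / w l ≤ A k l := by
          rw [div_le_iff₀ (hw l)]
          exact ht_le k hk l hl
        have hlb : w k / w l ≤ t * w k / w l := by
          rw [div_le_div_iff₀ (hw l) (hw l)]
          nlinarith [mul_pos (hw k) (hw l)]
        rw [hvr, abs_of_nonneg (by linarith), abs_of_nonneg (by linarith)]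
        linarith
      · -- k ∉ S, l ∈ S
        have hvr : v k / v l = w k / (t * w l) := by simp [hvdef, hk, hl]
        have hwlt : w l / w k < A l k := hcross l hl k hk
        have hAkl : A k l < w k / w l := by
          rw [hArec l k, div_lt_div_iff₀ (hAp l k) (hw l)]
          rw [div_lt_iff₀ (hw k)] at hwlt
          nlinarith
        have hlb : A k l ≤ w k / (t * w l) := by
          rw [hArec l k, div_le_div_iff₀ (hAp l k) (mul_pos ht0 (hw l))]
          have h1 := ht_le l hl k hk
          nlinarith
        have hub : w k / (t * w l) ≤ w k / w l := by
          rw [div_le_div_iff₀ (mul_pos ht0 (hw l)) (hw l)]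
          nlinarith [mul_pos (hw k) (hw l)]
        rw [hvr, abs_of_nonpos (by linarith), abs_of_nonpos (by linarith)]
        linarith
      · have : v k / v l = w k / w l := by simp [hvdef, hk, hl]
        rw [this]
    obtain ⟨c, hc, hvw⟩ := hE.2 v hvpos hineq
    have hj' : v j = c * w j := by rw [hvw]; simp
    have hi' : v i = c * w i := by rw [hvw]; simp
    have hc1 : c = 1 := by
      simp only [hvdef, if_neg hjS] at hj'
      have := (hw j).ne'
      field_simp at hj'
      linarith [hj']
    have : t = 1 := by
      simp only [hvdef, if_pos hiS] at hi'
      rw [hc1, one_mul] at hi'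
      have h0 := (hw i).ne'
      exact mul_right_cancel₀ h0 (by rw [hi', one_mul])
    linarith
  · -- strongly connected → efficient
    intro hSC
    refine ⟨hw, fun v hv hineq => ?_⟩
    have hall : ∀ i j : Fin n, v i / w i = v j / w j := by
      intro i j
      by_cases h : i = j
      · rw [h]
      · exact le_antisymm
          (path_ratio_mono ⟨hAp, hArec⟩ hw hv hineq (hSC i j h))
          (path_ratio_mono ⟨hAp, hArec⟩ hw hv hineq (hSC j i (Ne.symm h)))
    rcases Nat.eq_zero_or_pos n with h0 | hpos
    · subst h0
      exact ⟨1, one_pos, funext fun k => k.elim0⟩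
    · set i0 : Fin n := ⟨0, hpos⟩
      refine ⟨v i0 / w i0, div_pos (hv i0) (hw i0), funext fun k => ?_⟩
      have := hall k i0
      simp only [Pi.smul_apply, smul_eq_mul]
      rw [← this, div_mul_cancel₀ _ (hw k).ne']
end

section
/- Let A be an n-by-n reciprocal matrix and w an efficient vector for A. (i) If D is an n-by-n positive diagonal matrix, then D A D^{-1} is a reciprocal matrix and Dw is efficient for D A D^{-1}. (ii) If P is an n-by-n permutation matrix, then P A P^T is a reciprocal matrix and Pw is efficient for P A P^T. -/
open Matrix

/-! Permutation similarity `P A Pᵀ` is the reindexing `A.submatrix σ σ`, along which efficiency is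
simply transported. Positive diagonal similarity multiplies `a i j`, the ratio `w i / w j` for `D w`,
and every deviation `|a i j - v i / v j|` (after `v ↦ D v`) by the same factor `d i / d j > 0`, so the
comparisons defining efficiency are unchanged. -/

section Reindex

variable {ι κ : Type*}

theorem IsReciprocal.submatrix {A : Matrix ι ι ℝ} (hA : IsReciprocal A) (f : κ → ι) :
    IsReciprocal (A.submatrix f f) :=
  ⟨fun i j => hA.1 (f i) (f j), fun i j => hA.2 (f i) (f j)⟩

theorem IsEfficient.submatrix_equiv {A : Matrix ι ι ℝ} {w : ι → ℝ} (hw : IsEfficient A w)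
    (e : κ ≃ ι) : IsEfficient (A.submatrix e e) (w ∘ e) := by
  refine ⟨fun i => hw.1 (e i), fun v hv hle => ?_⟩
  obtain ⟨c, hc, hcv⟩ := hw.2 (v ∘ e.symm) (fun i => hv (e.symm i)) fun i j => by
    simpa using hle (e.symm i) (e.symm j)
  refine ⟨c, hc, funext fun i => ?_⟩
  simpa using congrFun hcv (e i)

end Reindex

section DiagonalConj

variable {ι : Type*}

theorem IsReciprocal.diagonal_conj {A : Matrix ι ι ℝ} (hA : IsReciprocal A) {d : ι → ℝ}
    (hd : ∀ i, 0 < d i) : IsReciprocal (of fun i j => d i * A i j / d j) := by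
  refine ⟨fun i j => by simpa using div_pos (mul_pos (hd i) (hA.1 i j)) (hd j), fun i j => ?_⟩
  have := (hA.1 i j).ne'
  simp only [of_apply, hA.2 i j]
  field_simp

theorem IsEfficient.diagonal_conj {A : Matrix ι ι ℝ} {w : ι → ℝ} (hw : IsEfficient A w)
    {d : ι → ℝ} (hd : ∀ i, 0 < d i) : IsEfficient (of fun i j => d i * A i j / d j) (d * w) := by
  refine ⟨fun i => mul_pos (hd i) (hw.1 i), fun v hv hle => ?_⟩
  obtain ⟨u, hu, rfl⟩ : ∃ u, PosVec u ∧ v = d * u :=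
    ⟨v / d, fun i => div_pos (hv i) (hd i),
      funext fun i => (mul_div_cancel₀ (v i) (hd i).ne').symm⟩
  have hdeviation : ∀ u : ι → ℝ, PosVec u → ∀ i j,
      |d i * A i j / d j - (d * u) i / (d * u) j| = d i / d j * |A i j - u i / u j| := by
    intro u hu i j
    have := (hd j).ne'
    have := (hu j).ne'
    rw [← abs_of_pos (div_pos (hd i) (hd j)), ← abs_mul, Pi.mul_apply, Pi.mul_apply]
    congr 1
    field_simp
  obtain ⟨c, hc, rfl⟩ := hw.2 u hu fun i j => by
    have h := hle i j
    rw [of_apply, hdeviation u hu, hdeviation w hw.1] at h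
    exact le_of_mul_le_mul_left h (div_pos (hd i) (hd j))
  exact ⟨c, hc, mul_smul_comm c d w⟩

variable [Fintype ι] [DecidableEq ι]

theorem diagonal_mul_mul_inv_diagonal {d : ι → ℝ} (hd : ∀ i, d i ≠ 0) (A : Matrix ι ι ℝ) :
    diagonal d * A * (diagonal d)⁻¹ = of fun i j => d i * A i j / d j := by
  have hinv : (diagonal d)⁻¹ = diagonal fun i => (d i)⁻¹ :=
    inv_eq_right_inv <| by simp [diagonal_mul_diagonal, hd]
  ext i j
  simp [hinv, div_eq_mul_inv]

theorem diagonal_mulVec_eq_mul (d w : ι → ℝ) : diagonal d *ᵥ w = d * w :=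
  funext fun i => mulVec_diagonal d w i

end DiagonalConj

theorem permMatrix_mul_mul_transpose {ι : Type*} [Fintype ι] [DecidableEq ι]
    (σ : Equiv.Perm ι) (A : Matrix ι ι ℝ) :
    σ.permMatrix ℝ * A * (σ.permMatrix ℝ)ᵀ = A.submatrix σ σ := by
  rw [transpose_permMatrix, PEquiv.toMatrix_toPEquiv_mul, PEquiv.mul_toMatrix_toPEquiv]
  simp [Equiv.Perm.inv_def]

/-- efficiency is preserved under positive diagonal similarity and under
permutation similarity. -/
theorem efficient_monomial_similarity {n : ℕ} (A : Matrix (Fin n) (Fin n) ℝ)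
    (hA : IsReciprocal A) (w : Fin n → ℝ) (hw : IsEfficient A w) :
    (∀ d : Fin n → ℝ, (∀ i, 0 < d i) →
      IsReciprocal (Matrix.diagonal d * A * (Matrix.diagonal d)⁻¹) ∧
      IsEfficient (Matrix.diagonal d * A * (Matrix.diagonal d)⁻¹)
        ((Matrix.diagonal d).mulVec w)) ∧
    (∀ σ : Equiv.Perm (Fin n),
      IsReciprocal (σ.permMatrix ℝ * A * (σ.permMatrix ℝ)ᵀ) ∧
      IsEfficient (σ.permMatrix ℝ * A * (σ.permMatrix ℝ)ᵀ) ((σ.permMatrix ℝ).mulVec w)) := by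
  refine ⟨fun d hd => ?_, fun σ => ?_⟩
  · rw [diagonal_mul_mul_inv_diagonal (fun i => (hd i).ne'), diagonal_mulVec_eq_mul]
    exact ⟨hA.diagonal_conj hd, hw.diagonal_conj hd⟩
  · rw [permMatrix_mul_mul_transpose, permMatrix_mulVec]
    exact ⟨hA.submatrix σ, hw.submatrix_equiv σ⟩
end

section
/- Let n ≥ 3, x > 0, 1 ≤ k < l ≤ n, and let D = diag(d_1,…,d_n) be a positive diagonal matrix. Let A = D S_{n,k,l}(x) D^{-1}. Then a positive vector w ∈ R^n is efficient for A if and only if either w_l/d_l ≤ w_i/d_i ≤ w_k/d_k ≤ (w_l/d_l)·x for all i ∈ {1,…,n} with i ≠ k, l, or w_l/d_l ≥ w_i/d_i ≥ w_k/d_k ≥ (w_l/d_l)·x for all i ∈ {1,…,n} with i ≠ k, l. -/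
/-- The simple perturbed consistent matrix `S_{n,k,l}(x)`: all entries `1` except the `(k,l)`
entry, which is `x`, and the `(l,k)` entry, which is `1/x`. -/
noncomputable def Spert {n : ℕ} (k l : Fin n) (x : ℝ) : Matrix (Fin n) (Fin n) ℝ :=
  Matrix.of fun i j => if i = k ∧ j = l then x else if i = l ∧ j = k then 1 / x else 1

/-!
Efficiency is invariant under a diagonal similarity `A ↦ D A D⁻¹, w ↦ D w`, so it suffices to
describe the efficient vectors `u` of `S = S_{n,k,l}(x)`.

If `u` is efficient for a reciprocal matrix `A`, then across every cut `T` of the index set some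
ratio satisfies `u i ≤ a_ij u j` with `i ∈ T`, `j ∉ T`: otherwise multiplying `u` on `T` by a
factor slightly below `1` moves every ratio across the cut closer to the matrix entry. For `S`
and non-constant `u`, applied to the maximal coordinates and to the non-minimal ones, such a
ratio can only sit at the entries `(k, l)` or `(l, k)`, the only entries different from `1`;
this forces `k` and `l` to carry the two extreme coordinates, in one of two orders.

Conversely, if `u l ≤ u i ≤ u k ≤ x u l` for all `i ≠ k, l` and `v` dominates `u`, then with
`ρ = v / u` domination gives `ρ l ≤ ρ k ≤ ρ i ≤ ρ l` for every such `i` (there is one since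
`n ≥ 3`), so `v` is a multiple of `u`. The other order reduces to this one through
`S_{n,k,l}(x) = S_{n,l,k}(x⁻¹)`.
-/

open Filter Topology

lemma le_of_abs_sub_le_abs_sub_of_le {a r s : ℝ} (h : |a - r| ≤ |a - s|) (hs : s ≤ a) :
    s ≤ r := by
  rw [abs_of_nonneg (sub_nonneg.2 hs)] at h
  linarith [le_abs_self (a - r)]

lemma le_of_abs_sub_le_abs_sub_of_ge {a r s : ℝ} (h : |a - r| ≤ |a - s|) (hs : a ≤ s) :
    r ≤ s := by
  rw [abs_of_nonpos (sub_nonpos.2 hs)] at h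
  linarith [neg_abs_le (a - r)]

lemma div_le_div_iff_div_le_div {a b c d : ℝ} (hb : 0 < b) (hc : 0 < c) (hd : 0 < d) :
    a / b ≤ c / d ↔ a / c ≤ b / d := by
  rw [div_le_div_iff₀ hb hd, div_le_div_iff₀ hc hd, mul_comm c b]

lemma div_le_div_iff_div_le_div' {a b c d : ℝ} (ha : 0 < a) (hb : 0 < b) (hd : 0 < d) :
    a / b ≤ c / d ↔ d / b ≤ c / a := by
  rw [div_le_div_iff₀ hb hd, div_le_div_iff₀ hb ha, mul_comm a d]

lemma Matrix.diagonal_mul_mul_inv_diagonal_apply {ι K : Type*} [Fintype ι] [DecidableEq ι]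
    [Field K] {d : ι → K} (hd : ∀ i, d i ≠ 0) (S : Matrix ι ι K) (i j : ι) :
    (diagonal d * S * (diagonal d)⁻¹) i j = d i * S i j / d j := by
  have hinv : (diagonal d)⁻¹ = diagonal d⁻¹ := inv_eq_left_inv <| by
    rw [diagonal_mul_diagonal, ← diagonal_one]
    exact congrArg diagonal (funext fun i => inv_mul_cancel₀ (hd i))
  rw [hinv, mul_diagonal, diagonal_mul, div_eq_mul_inv, Pi.inv_apply]

section Efficiency

variable {ι : Type*}

theorem IsEfficient.exists_le_mul_of_mem_of_notMem [Finite ι] {A : Matrix ι ι ℝ}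
    (hA : IsReciprocal A) {u : ι → ℝ} (hu : IsEfficient A u) {T : Set ι} {i₀ j₀ : ι}
    (hi₀ : i₀ ∈ T) (hj₀ : j₀ ∉ T) : ∃ i ∈ T, ∃ j ∉ T, u i ≤ A i j * u j := by
  classical
  by_contra! h
  obtain ⟨hpos, heff⟩ := hu
  obtain ⟨t, ht, ht0, ht1⟩ :
      ∃ t : ℝ, (∀ i j, i ∈ T → j ∉ T → A i j * u j ≤ t * u i) ∧ 0 < t ∧ t < 1 := by
    have hev : ∀ᶠ t in 𝓝[<] (1 : ℝ), ∀ i j, i ∈ T → j ∉ T → A i j * u j ≤ t * u i := by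
      refine eventually_all.2 fun i => eventually_all.2 fun j => ?_
      by_cases hij : i ∈ T ∧ j ∉ T
      · have hlim : Tendsto (fun t : ℝ => t * u i) (𝓝[<] 1) (𝓝 (u i)) :=
          ((continuous_mul_const (u i)).tendsto' 1 (u i) (one_mul _)).mono_left
            nhdsWithin_le_nhds
        exact (hlim.eventually_const_lt (h i hij.1 j hij.2)).mono fun t ht _ _ => ht.le
      · exact Eventually.of_forall fun t hi hj => absurd ⟨hi, hj⟩ hij
    exact (hev.and (Ioo_mem_nhdsLT one_pos)).exists
  set v : ι → ℝ := T.piecewise (fun i => t * u i) u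
  have hvpos : PosVec v := fun i => by
    by_cases hi : i ∈ T
    · simpa [v, hi] using mul_pos ht0 (hpos i)
    · simpa [v, hi] using hpos i
  have hdom : ∀ i j, |A i j - v i / v j| ≤ |A i j - u i / u j| := by
    intro i j
    apply Set.abs_sub_right_of_mem_uIcc
    by_cases hi : i ∈ T <;> by_cases hj : j ∈ T <;>
      simp only [v, Set.piecewise_eq_of_mem, Set.piecewise_eq_of_notMem, hi, hj,
        not_false_eq_true]
    · rw [mul_div_mul_left _ _ ht0.ne']
      exact Set.left_mem_uIcc
    · refine Set.mem_uIcc.2 (.inr ⟨?_, ?_⟩)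
      · rw [le_div_iff₀ (hpos j)]
        exact ht i j hi hj
      · exact div_le_div_of_nonneg_right (mul_le_of_le_one_left (hpos i).le ht1.le)
          (hpos j).le
    · refine Set.mem_uIcc.2 (.inl ⟨?_, ?_⟩)
      · exact div_le_div_of_nonneg_left (hpos i).le (mul_pos ht0 (hpos j))
          (mul_le_of_le_one_left (hpos j).le ht1.le)
      · rw [hA.2 j i, div_le_div_iff₀ (mul_pos ht0 (hpos j)) (hA.1 j i)]
        linarith [ht j i hj hi]
    · exact Set.left_mem_uIcc
  obtain ⟨c, -, hc⟩ := heff v hvpos hdom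
  have hci := congrFun hc i₀
  have hcj := congrFun hc j₀
  simp only [v, Set.piecewise_eq_of_mem _ _ _ hi₀, Set.piecewise_eq_of_notMem _ _ _ hj₀,
    Pi.smul_apply, smul_eq_mul] at hci hcj
  rw [(mul_eq_right₀ (hpos j₀).ne').1 hcj.symm, one_mul] at hci
  exact ht1.ne ((mul_eq_right₀ (hpos i₀).ne').1 hci)

theorem IsEfficient.of_diagonal_conj {S A : Matrix ι ι ℝ} {d u : ι → ℝ} (hd : ∀ i, 0 < d i)
    (hA : ∀ i j, A i j = d i * S i j / d j) (hu : IsEfficient S u) :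
    IsEfficient A (fun i => d i * u i) := by
  obtain ⟨hpos, heff⟩ := hu
  have hdist : ∀ r : ι → ℝ, PosVec r → ∀ i j,
      |A i j - d i * r i / (d j * r j)| = |d i / d j| * |S i j - r i / r j| := by
    intro r hr i j
    have := (hd j).ne'
    have := (hr j).ne'
    rw [← abs_mul, hA]
    congr 1
    field_simp
  refine ⟨fun i => mul_pos (hd i) (hpos i), fun v hv hdom => ?_⟩
  have hvd : ∀ i, v i = d i * (v i / d i) := fun i => (mul_div_cancel₀ _ (hd i).ne').symm
  have hp : PosVec fun i => v i / d i := fun i => div_pos (hv i) (hd i)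
  obtain ⟨c, hc, hvc⟩ := heff _ hp fun i j => by
    have := hdom i j
    rw [hvd i, hvd j, hdist _ hp, hdist u hpos] at this
    exact le_of_mul_le_mul_left this (abs_pos.2 (div_pos (hd i) (hd j)).ne')
  refine ⟨c, hc, funext fun i => ?_⟩
  have := congrFun hvc i
  simp only [Pi.smul_apply, smul_eq_mul] at this ⊢
  rw [hvd i, this]
  ring

theorem isEfficient_iff_of_diagonal_conj {S A : Matrix ι ι ℝ} {d : ι → ℝ} (hd : ∀ i, 0 < d i)
    (hA : ∀ i j, A i j = d i * S i j / d j) (w : ι → ℝ) :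
    IsEfficient A w ↔ IsEfficient S (fun i => w i / d i) := by
  constructor
  · intro h
    have hS : ∀ i j, S i j = (d i)⁻¹ * A i j / (d j)⁻¹ := fun i j => by
      have := (hd i).ne'
      have := (hd j).ne'
      rw [hA]
      field_simp
    simpa only [inv_mul_eq_div] using h.of_diagonal_conj (fun i => inv_pos.2 (hd i)) hS
  · intro h
    convert h.of_diagonal_conj hd hA
    exact (mul_div_cancel₀ _ (hd _).ne').symm

end Efficiency

section Spert

variable {n : ℕ} {k l : Fin n} {x : ℝ}

lemma Spert_apply_same : Spert k l x k l = x := by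
  simp [Spert]

lemma Spert_apply_swap (hkl : k ≠ l) : Spert k l x l k = x⁻¹ := by
  simp [Spert, hkl.symm]

lemma Spert_apply_of_ne {i j : Fin n} (h : ¬(i = k ∧ j = l)) (h' : ¬(i = l ∧ j = k)) :
    Spert k l x i j = 1 := by
  simp only [Spert, Matrix.of_apply, if_neg h, if_neg h']

lemma Spert_comm (hkl : k ≠ l) : Spert k l x = Spert l k x⁻¹ := by
  ext i j
  simp only [Spert, Matrix.of_apply]
  split_ifs <;> simp_all

lemma isReciprocal_Spert (hx : 0 < x) (hkl : k ≠ l) : IsReciprocal (Spert k l x) := by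
  constructor
  · intro i j
    simp only [Spert, Matrix.of_apply]
    split_ifs <;> positivity
  · intro i j
    simp only [Spert, Matrix.of_apply]
    split_ifs <;> simp_all

lemma eq_and_eq_or_eq_and_eq_of_le_Spert_mul {u : Fin n → ℝ} {i j : Fin n} (hlt : u j < u i)
    (hle : u i ≤ Spert k l x i j * u j) : (i = k ∧ j = l) ∨ (i = l ∧ j = k) := by
  by_contra h
  rw [not_or] at h
  rw [Spert_apply_of_ne h.1 h.2, one_mul] at hle
  exact hle.not_gt hlt

theorem isEfficient_Spert_of_chain (hn : 3 ≤ n) {u : Fin n → ℝ} (hu : PosVec u)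
    (hmid : ∀ i, i ≠ k → i ≠ l → u l ≤ u i ∧ u i ≤ u k) (hx : u k ≤ u l * x) :
    IsEfficient (Spert k l x) u := by
  obtain ⟨i₀, hi₀k, hi₀l⟩ := Fin.exists_ne_and_ne_of_two_lt k l hn
  refine ⟨hu, fun v hv hdom => ?_⟩
  set ρ : Fin n → ℝ := fun i => v i / u i
  have hlk : ρ l ≤ ρ k := by
    have h := hdom k l
    rw [Spert_apply_same] at h
    exact (div_le_div_iff_div_le_div' (hu k) (hu l) (hv l)).1
      (le_of_abs_sub_le_abs_sub_of_le h ((div_le_iff₀ (hu l)).2 (by linarith)))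
  have hchain : ∀ i, i ≠ k → i ≠ l → ρ k ≤ ρ i ∧ ρ i ≤ ρ l := by
    intro i hik hil
    have hki := hdom k i
    have hil' := hdom i l
    rw [Spert_apply_of_ne (fun h => hil h.2) (fun h => hik h.2)] at hki
    rw [Spert_apply_of_ne (fun h => hik h.1) (fun h => hil h.1)] at hil'
    obtain ⟨hli, hik'⟩ := hmid i hik hil
    exact ⟨(div_le_div_iff_div_le_div (hv i) (hu k) (hu i)).1
        (le_of_abs_sub_le_abs_sub_of_ge hki ((one_le_div (hu i)).2 hik')),
      (div_le_div_iff_div_le_div (hv l) (hu i) (hu l)).1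
        (le_of_abs_sub_le_abs_sub_of_ge hil' ((one_le_div (hu l)).2 hli))⟩
  have hconst : ∀ i, ρ i = ρ l := by
    have hk : ρ k = ρ l :=
      le_antisymm ((hchain i₀ hi₀k hi₀l).1.trans (hchain i₀ hi₀k hi₀l).2) hlk
    intro i
    by_cases hik : i = k
    · rw [hik, hk]
    by_cases hil : i = l
    · rw [hil]
    exact le_antisymm (hchain i hik hil).2 (hk ▸ (hchain i hik hil).1)
  refine ⟨ρ l, div_pos (hv l) (hu l), funext fun i => ?_⟩
  rw [Pi.smul_apply, smul_eq_mul, ← hconst i, div_mul_cancel₀ _ (hu i).ne']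

theorem IsEfficient.chain_of_Spert (hx : 0 < x) (hkl : k ≠ l) {u : Fin n → ℝ}
    (hu : IsEfficient (Spert k l x) u) :
    ((∀ i, i ≠ k → i ≠ l → u l ≤ u i ∧ u i ≤ u k) ∧ u k ≤ u l * x) ∨
      ((∀ i, i ≠ k → i ≠ l → u l ≥ u i ∧ u i ≥ u k) ∧ u k ≥ u l * x) := by
  have : Nonempty (Fin n) := ⟨k⟩
  obtain ⟨a, ha⟩ := Finite.exists_max u
  obtain ⟨b, hb⟩ := Finite.exists_min u
  rcases (hb a).eq_or_lt with hab | hab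
  · have hconst : ∀ i, u i = u l := fun i =>
      le_antisymm ((ha i).trans (hab ▸ hb l)) ((ha l).trans (hab ▸ hb i))
    rcases le_total 1 x with h1x | hx1
    · refine .inl ⟨fun i _ _ => ⟨(hconst i).ge, ((hconst i).trans (hconst k).symm).le⟩, ?_⟩
      rw [hconst k]
      exact le_mul_of_one_le_right (hu.1 l).le h1x
    · refine .inr ⟨fun i _ _ => ⟨(hconst i).le, ((hconst k).trans (hconst i).symm).le⟩, ?_⟩
      rw [hconst k]
      exact mul_le_of_le_one_right (hu.1 l).le hx1
  have hS := isReciprocal_Spert hx hkl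
  obtain ⟨i, hi, j, hj, hij⟩ :=
    hu.exists_le_mul_of_mem_of_notMem hS (T := {i | u i = u a}) rfl hab.ne
  obtain ⟨i', hi', j', hj', hij'⟩ :=
    hu.exists_le_mul_of_mem_of_notMem hS (T := {i | u i ≠ u b}) hab.ne' (not_not.2 rfl)
  have hi : u i = u a := hi
  have hj' : u j' = u b := not_not.1 hj'
  have htop := eq_and_eq_or_eq_and_eq_of_le_Spert_mul
    ((lt_of_le_of_ne (ha j) hj).trans_eq hi.symm) hij
  have hbot := eq_and_eq_or_eq_and_eq_of_le_Spert_mul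
    (hj'.trans_lt (lt_of_le_of_ne (hb i') (Ne.symm hi'))) hij'
  rcases htop with ⟨hik, hjl⟩ | ⟨hil, hjk⟩ <;> rcases hbot with ⟨hi'k, hj'l⟩ | ⟨hi'l, hj'k⟩ <;>
    subst i j i' j'
  · rw [Spert_apply_same] at hij
    exact .inl ⟨fun m _ _ => ⟨hj' ▸ hb m, hi ▸ ha m⟩, by linarith⟩
  · exact absurd (hi.symm.trans hj') hab.ne'
  · exact absurd (hi.symm.trans hj') hab.ne'
  · rw [Spert_apply_swap hkl, le_inv_mul_iff₀ hx] at hij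
    exact .inr ⟨fun m _ _ => ⟨hi ▸ ha m, hj' ▸ hb m⟩, by linarith⟩

theorem isEfficient_Spert_iff (hn : 3 ≤ n) (hx : 0 < x) (hkl : k ≠ l) {u : Fin n → ℝ}
    (hu : PosVec u) :
    IsEfficient (Spert k l x) u ↔
      ((∀ i, i ≠ k → i ≠ l → u l ≤ u i ∧ u i ≤ u k) ∧ u k ≤ u l * x) ∨
        ((∀ i, i ≠ k → i ≠ l → u l ≥ u i ∧ u i ≥ u k) ∧ u k ≥ u l * x) := by
  refine ⟨(·.chain_of_Spert hx hkl), ?_⟩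
  rintro (⟨hmid, hkx⟩ | ⟨hmid, hkx⟩)
  · exact isEfficient_Spert_of_chain hn hu hmid hkx
  · rw [Spert_comm hkl]
    exact isEfficient_Spert_of_chain hn hu (fun i hil hik => (hmid i hik hil).symm)
      ((le_mul_inv_iff₀ hx).2 hkx)

end Spert

/-- description of the efficient vectors for `A = D S_{n,k,l}(x) D⁻¹`, where `D`
is a positive diagonal matrix. -/
theorem efficient_iff_simple_perturbed {n : ℕ} (hn : 3 ≤ n) (x : ℝ) (hx : 0 < x)
    (k l : Fin n) (hkl : k < l) (d : Fin n → ℝ) (hd : ∀ i, 0 < d i)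
    (A : Matrix (Fin n) (Fin n) ℝ)
    (hA : A = Matrix.diagonal d * Spert k l x * (Matrix.diagonal d)⁻¹)
    (w : Fin n → ℝ) (hw : PosVec w) :
    IsEfficient A w ↔
      (((∀ i, i ≠ k → i ≠ l → w l / d l ≤ w i / d i ∧ w i / d i ≤ w k / d k) ∧
          w k / d k ≤ (w l / d l) * x) ∨
        ((∀ i, i ≠ k → i ≠ l → w l / d l ≥ w i / d i ∧ w i / d i ≥ w k / d k) ∧
          w k / d k ≥ (w l / d l) * x)) := by
  have hA' : ∀ i j, A i j = d i * Spert k l x i j / d j := fun i j => by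
    rw [hA, Matrix.diagonal_mul_mul_inv_diagonal_apply fun i => (hd i).ne']
  rw [isEfficient_iff_of_diagonal_conj hd hA']
  exact isEfficient_Spert_iff hn hx hkl.ne fun i => div_pos (hw i) (hd i)
end

section
/- Let A be the 3-by-3 reciprocal matrix with ones on the diagonal and above-diagonal entries a_12, a_13, a_23 > 0 (so its (2,1), (3,1), (3,2) entries are 1/a_12, 1/a_13, 1/a_23). Then a positive vector w = (w_1, w_2, w_3) is efficient for A if and only if either a_23·w_3 ≤ w_2 ≤ w_1/a_12 ≤ (a_13/a_12)·w_3, or a_23·w_3 ≥ w_2 ≥ w_1/a_12 ≥ (a_13/a_12)·w_3. -/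
/-!
If every ratio `w k / w j` (`j ≠ k`) lies strictly on the same side of `A k j`, multiplying
`w k` by a factor close to `1` moves all of them towards `A k j`, and by reciprocity also
every `w j / w k` towards `A j k`; so `w` is not efficient. For `n = 3` the absence of such
an index `k` is exactly the stated chain of inequalities. Conversely, under the chain
condition any `v` at least as good as `w` has `v i / w i` nondecreasing along the cycle
`0 → 1 → 2 → 0`, hence constant.
-/

open Filter Topology Set

section

variable {ι : Type*} {A : Matrix ι ι ℝ} {w : ι → ℝ}

lemma inv_mem_uIcc_inv {a b c : ℝ} (ha : 0 < a) (hb : 0 < b) (h : c ∈ uIcc a b) :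
    c⁻¹ ∈ uIcc a⁻¹ b⁻¹ := by
  rcases mem_uIcc.1 h with ⟨hac, hcb⟩ | ⟨hbc, hca⟩
  · exact mem_uIcc.2 (Or.inr ⟨inv_anti₀ (ha.trans_le hac) hcb, inv_anti₀ ha hac⟩)
  · exact mem_uIcc.2 (Or.inl ⟨inv_anti₀ (hb.trans_le hbc) hca, inv_anti₀ hb hbc⟩)

lemma IsReciprocal.lt_div_iff (hA : IsReciprocal A) (hw : PosVec w) (i j : ι) :
    A i j < w i / w j ↔ w j / w i < A j i := by
  rw [hA.2 i j, ← one_div_div (w i), one_div_lt_one_div (div_pos (hw i) (hw j)) (hA.1 i j)]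

lemma not_isEfficient_of_scale [DecidableEq ι] (hA : IsReciprocal A) (hw : PosVec w)
    {k j₀ : ι} (hj₀ : j₀ ≠ k) {μ : ℝ} (hμ : 0 < μ) (hμ1 : μ ≠ 1)
    (h : ∀ j ≠ k, μ * (w k / w j) ∈ uIcc (w k / w j) (A k j)) : ¬ IsEfficient A w := by
  set v := Function.update w k (μ * w k)
  have hv : PosVec v := by
    intro i
    by_cases hi : i = k
    · subst hi; simpa [v] using mul_pos hμ (hw i)
    · simpa [v, hi] using hw i
  have hvw : ∀ i j, |A i j - v i / v j| ≤ |A i j - w i / w j| := by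
    intro i j
    by_cases hij : i = j
    · subst hij; rw [div_self (hv i).ne', div_self (hw i).ne']
    by_cases hi : i = k
    · subst hi
      simp only [v, Function.update_self, Function.update_of_ne (Ne.symm hij)]
      rw [mul_div_assoc]
      exact abs_sub_right_of_mem_uIcc (h j (Ne.symm hij))
    by_cases hj : j = k
    · subst hj
      simp only [v, Function.update_self, Function.update_of_ne hi]
      have hinv := inv_mem_uIcc_inv (div_pos (hw j) (hw i)) (hA.1 j i) (h i hi)
      rw [mul_inv, inv_div, ← one_div, ← hA.2 j i] at hinv
      rw [show w i / (μ * w j) = μ⁻¹ * (w i / w j) by ring]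
      exact abs_sub_right_of_mem_uIcc hinv
    · simp only [v, Function.update_of_ne hi, Function.update_of_ne hj, le_refl]
  intro heff
  obtain ⟨c, -, hc⟩ := heff.2 v hv hvw
  have hc1 : c = 1 := by
    have h₀ := congrFun hc j₀
    simp only [v, Function.update_of_ne hj₀, Pi.smul_apply, smul_eq_mul] at h₀
    exact (mul_eq_right₀ (hw j₀).ne').1 h₀.symm
  have hk := congrFun hc k
  simp only [v, Function.update_self, Pi.smul_apply, smul_eq_mul, hc1, one_mul] at hk
  exact hμ1 (mul_eq_right₀ (hw k).ne' |>.1 hk)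

lemma eventually_mul_mem_uIcc_of_lt {a x : ℝ} (hx : 0 < x) (h : a < x) :
    ∀ᶠ μ in 𝓝[<] 1, μ * x ∈ uIcc x a := by
  have hlim : Tendsto (· * x) (𝓝[<] 1) (𝓝 x) :=
    ((continuous_mul_const x).tendsto' 1 x (one_mul x)).mono_left nhdsWithin_le_nhds
  filter_upwards [hlim.eventually_const_le h, self_mem_nhdsWithin] with μ hμa hμ1
  exact mem_uIcc.2 (Or.inr ⟨hμa, mul_le_of_le_one_left hx.le (le_of_lt hμ1)⟩)

lemma eventually_mul_mem_uIcc_of_gt {a x : ℝ} (hx : 0 < x) (h : x < a) :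
    ∀ᶠ μ in 𝓝[>] 1, μ * x ∈ uIcc x a := by
  have hlim : Tendsto (· * x) (𝓝[>] 1) (𝓝 x) :=
    ((continuous_mul_const x).tendsto' 1 x (one_mul x)).mono_left nhdsWithin_le_nhds
  filter_upwards [hlim.eventually_le_const h, self_mem_nhdsWithin] with μ hμa hμ1
  exact mem_uIcc.2 (Or.inl ⟨le_mul_of_one_le_left hx.le (le_of_lt hμ1), hμa⟩)

lemma not_isEfficient_of_eventually [Finite ι] [DecidableEq ι] (hA : IsReciprocal A)
    (hw : PosVec w) {k j₀ : ι} (hj₀ : j₀ ≠ k) {l : Filter ℝ} [l.NeBot]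
    (hl : ∀ᶠ μ in l, 0 < μ ∧ μ ≠ 1)
    (h : ∀ j ≠ k, ∀ᶠ μ in l, μ * (w k / w j) ∈ uIcc (w k / w j) (A k j)) :
    ¬ IsEfficient A w := by
  obtain ⟨μ, ⟨hμ, hμ1⟩, hμk⟩ := (hl.and ((eventually_all_finite (toFinite {k}ᶜ)).2 h)).exists
  exact not_isEfficient_of_scale hA hw hj₀ hμ hμ1 hμk

lemma not_isEfficient_of_forall_lt [Finite ι] [DecidableEq ι] (hA : IsReciprocal A)
    (hw : PosVec w) {k j₀ : ι} (hj₀ : j₀ ≠ k) (h : ∀ j ≠ k, A k j < w k / w j) :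
    ¬ IsEfficient A w := by
  refine not_isEfficient_of_eventually hA hw hj₀ (l := 𝓝[<] 1) ?_
    fun j hj => eventually_mul_mem_uIcc_of_lt (div_pos (hw k) (hw j)) (h j hj)
  filter_upwards [nhdsWithin_le_nhds (lt_mem_nhds one_pos), self_mem_nhdsWithin] with μ hμ hμ1
  exact ⟨hμ, ne_of_lt hμ1⟩

lemma not_isEfficient_of_forall_gt [Finite ι] [DecidableEq ι] (hA : IsReciprocal A)
    (hw : PosVec w) {k j₀ : ι} (hj₀ : j₀ ≠ k) (h : ∀ j ≠ k, w k / w j < A k j) :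
    ¬ IsEfficient A w := by
  refine not_isEfficient_of_eventually hA hw hj₀ (l := 𝓝[>] 1) ?_
    fun j hj => eventually_mul_mem_uIcc_of_gt (div_pos (hw k) (hw j)) (h j hj)
  filter_upwards [nhdsWithin_le_nhds (lt_mem_nhds one_pos), self_mem_nhdsWithin] with μ hμ hμ1
  exact ⟨hμ, ne_of_gt hμ1⟩

end

lemma le_of_abs_sub_le_abs_sub {a x y : ℝ} (hax : a ≤ x) (h : |a - y| ≤ |a - x|) : y ≤ x := by
  rw [abs_sub_comm a x, abs_of_nonneg (sub_nonneg.2 hax), abs_sub_comm] at h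
  linarith [le_abs_self (y - a)]

lemma ge_of_abs_sub_le_abs_sub {a x y : ℝ} (hxa : x ≤ a) (h : |a - y| ≤ |a - x|) : x ≤ y := by
  rw [abs_of_nonneg (sub_nonneg.2 hxa)] at h
  linarith [le_abs_self (a - y)]

lemma exists_eq_smul_of_ratios_le {v w : Fin 3 → ℝ} (hv : PosVec v) (hw : PosVec w)
    (h01 : v 0 / v 1 ≤ w 0 / w 1) (h12 : v 1 / v 2 ≤ w 1 / w 2) (h02 : w 0 / w 2 ≤ v 0 / v 2) :
    ∃ c : ℝ, 0 < c ∧ v = c • w := by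
  have t01 : v 0 / w 0 ≤ v 1 / w 1 := by
    rw [div_le_div_iff₀ (hv 1) (hw 1)] at h01; rw [div_le_div_iff₀ (hw 0) (hw 1)]; linarith
  have t12 : v 1 / w 1 ≤ v 2 / w 2 := by
    rw [div_le_div_iff₀ (hv 2) (hw 2)] at h12; rw [div_le_div_iff₀ (hw 1) (hw 2)]; linarith
  have t20 : v 2 / w 2 ≤ v 0 / w 0 := by
    rw [div_le_div_iff₀ (hw 2) (hv 2)] at h02; rw [div_le_div_iff₀ (hw 2) (hw 0)]; linarith
  have hconst : ∀ i, v i / w i = v 0 / w 0 := by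
    intro i; fin_cases i
    exacts [rfl, le_antisymm (t12.trans t20) t01, le_antisymm t20 (t01.trans t12)]
  refine ⟨v 0 / w 0, div_pos (hv 0) (hw 0), funext fun i => ?_⟩
  rw [Pi.smul_apply, smul_eq_mul, ← hconst i, div_mul_cancel₀ _ (hw i).ne']

section

variable {A : Matrix (Fin 3) (Fin 3) ℝ} {w : Fin 3 → ℝ}

lemma isEfficient_of_ratios_le (hw : PosVec w)
    (h : A 0 1 ≤ w 0 / w 1 ∧ A 1 2 ≤ w 1 / w 2 ∧ w 0 / w 2 ≤ A 0 2) : IsEfficient A w := by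
  obtain ⟨h01, h12, h02⟩ := h
  exact ⟨hw, fun v hv hvw => exists_eq_smul_of_ratios_le hv hw
    (le_of_abs_sub_le_abs_sub h01 (hvw 0 1)) (le_of_abs_sub_le_abs_sub h12 (hvw 1 2))
    (ge_of_abs_sub_le_abs_sub h02 (hvw 0 2))⟩

lemma isEfficient_of_ratios_ge (hw : PosVec w)
    (h : w 0 / w 1 ≤ A 0 1 ∧ w 1 / w 2 ≤ A 1 2 ∧ A 0 2 ≤ w 0 / w 2) : IsEfficient A w := by
  obtain ⟨h01, h12, h02⟩ := h
  refine ⟨hw, fun v hv hvw => ?_⟩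
  obtain ⟨c, hc, rfl⟩ := exists_eq_smul_of_ratios_le hw hv
    (ge_of_abs_sub_le_abs_sub h01 (hvw 0 1)) (ge_of_abs_sub_le_abs_sub h12 (hvw 1 2))
    (le_of_abs_sub_le_abs_sub h02 (hvw 0 2))
  exact ⟨c⁻¹, inv_pos.2 hc, (inv_smul_smul₀ hc.ne' v).symm⟩

lemma IsEfficient.ratios_le_or_ratios_ge (hA : IsReciprocal A) (h : IsEfficient A w) :
    (A 0 1 ≤ w 0 / w 1 ∧ A 1 2 ≤ w 1 / w 2 ∧ w 0 / w 2 ≤ A 0 2) ∨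
      (w 0 / w 1 ≤ A 0 1 ∧ w 1 / w 2 ≤ A 1 2 ∧ A 0 2 ≤ w 0 / w 2) := by
  have hw := h.1
  by_contra hne
  simp only [not_or, not_and_or, not_le] at hne
  obtain ⟨h01 | h12 | h02, h01' | h12' | h02'⟩ := hne
  · exact lt_asymm h01 h01'
  · refine not_isEfficient_of_forall_lt hA hw (k := 1) (j₀ := 0) (by decide) ?_ h
    intro j hj; fin_cases j
    exacts [(hA.lt_div_iff hw 1 0).2 h01, absurd rfl hj, h12']
  · refine not_isEfficient_of_forall_gt hA hw (k := 0) (j₀ := 1) (by decide) ?_ h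
    intro j hj; fin_cases j
    exacts [absurd rfl hj, h01, h02']
  · refine not_isEfficient_of_forall_gt hA hw (k := 1) (j₀ := 0) (by decide) ?_ h
    intro j hj; fin_cases j
    exacts [(hA.lt_div_iff hw 0 1).1 h01', absurd rfl hj, h12]
  · exact lt_asymm h12 h12'
  · refine not_isEfficient_of_forall_lt hA hw (k := 2) (j₀ := 0) (by decide) ?_ h
    intro j hj; fin_cases j
    exacts [(hA.lt_div_iff hw 2 0).2 h02', (hA.lt_div_iff hw 2 1).2 h12, absurd rfl hj]
  · refine not_isEfficient_of_forall_lt hA hw (k := 0) (j₀ := 1) (by decide) ?_ h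
    intro j hj; fin_cases j
    exacts [absurd rfl hj, h01', h02]
  · refine not_isEfficient_of_forall_gt hA hw (k := 2) (j₀ := 0) (by decide) ?_ h
    intro j hj; fin_cases j
    exacts [(hA.lt_div_iff hw 0 2).1 h02, (hA.lt_div_iff hw 1 2).1 h12', absurd rfl hj]
  · exact lt_asymm h02 h02'

theorem isEfficient_iff_ratios_le_or_ratios_ge (hA : IsReciprocal A) (hw : PosVec w) :
    IsEfficient A w ↔
      (A 0 1 ≤ w 0 / w 1 ∧ A 1 2 ≤ w 1 / w 2 ∧ w 0 / w 2 ≤ A 0 2) ∨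
        (w 0 / w 1 ≤ A 0 1 ∧ w 1 / w 2 ≤ A 1 2 ∧ A 0 2 ≤ w 0 / w 2) :=
  ⟨fun h => h.ratios_le_or_ratios_ge hA,
    fun h => h.elim (isEfficient_of_ratios_le hw) (isEfficient_of_ratios_ge hw)⟩

end

lemma isReciprocal_three {a b c : ℝ} (ha : 0 < a) (hb : 0 < b) (hc : 0 < c) :
    IsReciprocal !![1, a, b; 1 / a, 1, c; 1 / b, 1 / c, 1] := by
  refine ⟨fun i j => ?_, fun i j => ?_⟩ <;> fin_cases i <;> fin_cases j <;> simp [ha, hb, hc]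

lemma chain_le_iff {a12 a13 a23 w0 w1 w2 : ℝ} (h12 : 0 < a12) (hw1 : 0 < w1) (hw2 : 0 < w2) :
    (a23 * w2 ≤ w1 ∧ w1 ≤ w0 / a12 ∧ w0 / a12 ≤ (a13 / a12) * w2) ↔
      (a12 ≤ w0 / w1 ∧ a23 ≤ w1 / w2 ∧ w0 / w2 ≤ a13) := by
  rw [le_div_iff₀ h12, le_div_iff₀ hw1, le_div_iff₀ hw2, div_le_iff₀ hw2, div_mul_eq_mul_div,
    div_le_div_iff_of_pos_right h12, mul_comm w1]
  tauto

lemma chain_ge_iff {a12 a13 a23 w0 w1 w2 : ℝ} (h12 : 0 < a12) (hw1 : 0 < w1) (hw2 : 0 < w2) :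
    (a23 * w2 ≥ w1 ∧ w1 ≥ w0 / a12 ∧ w0 / a12 ≥ (a13 / a12) * w2) ↔
      (w0 / w1 ≤ a12 ∧ w1 / w2 ≤ a23 ∧ a13 ≤ w0 / w2) := by
  rw [ge_iff_le, ge_iff_le, ge_iff_le, div_le_iff₀ h12, div_le_iff₀ hw1, div_le_iff₀ hw2,
    le_div_iff₀ hw2, div_mul_eq_mul_div, div_le_div_iff_of_pos_right h12, mul_comm w1]
  tauto

/-- description of the efficient vectors for a 3-by-3 reciprocal matrix. -/
theorem efficient_iff_three_by_three (a12 a13 a23 : ℝ)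
    (h12 : 0 < a12) (h13 : 0 < a13) (h23 : 0 < a23)
    (A : Matrix (Fin 3) (Fin 3) ℝ)
    (hA : A = !![1, a12, a13; 1 / a12, 1, a23; 1 / a13, 1 / a23, 1])
    (w : Fin 3 → ℝ) (hw : PosVec w) :
    IsEfficient A w ↔
      ((a23 * w 2 ≤ w 1 ∧ w 1 ≤ w 0 / a12 ∧ w 0 / a12 ≤ (a13 / a12) * w 2) ∨
        (a23 * w 2 ≥ w 1 ∧ w 1 ≥ w 0 / a12 ∧ w 0 / a12 ≥ (a13 / a12) * w 2)) := by
  subst hA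
  rw [chain_le_iff h12 (hw 1) (hw 2), chain_ge_iff h12 (hw 1) (hw 2)]
  exact isEfficient_iff_ratios_le_or_ratios_ge (isReciprocal_three h12 h13 h23) hw
end

section
/- Let A = [a_ij] be an n-by-n reciprocal matrix, w a positive n-vector, and k ∈ {1,…,n}. Suppose that w(k) is efficient for A(k). Then w is efficient for A if and only if min_{1≤i≤n, i≠k} w_i/a_ik ≤ w_k ≤ max_{1≤i≤n, i≠k} w_i/a_ik. -/
/-- The principal submatrix `A(k)` of `A` obtained by deleting row and column `k`. -/
def delMat {n : ℕ} (A : Matrix (Fin n) (Fin n) ℝ) (k : Fin n) :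
    Matrix {i : Fin n // i ≠ k} {i : Fin n // i ≠ k} ℝ :=
  Matrix.of fun a b => A a.1 b.1

/-- The vector `w(k)` obtained from `w` by deleting the `k`-th entry. -/
def delVec {n : ℕ} (w : Fin n → ℝ) (k : Fin n) : {i : Fin n // i ≠ k} → ℝ :=
  fun a => w a.1

theorem erase_univ_nonempty {n : ℕ} (hn : 2 ≤ n) (k : Fin n) :
    ((Finset.univ : Finset (Fin n)).erase k).Nonempty := by
  rw [← Finset.card_pos, Finset.card_erase_of_mem (Finset.mem_univ k), Finset.card_univ,
    Fintype.card_fin]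
  omega

lemma abs_between' {a x y : ℝ} (h : (a ≤ x ∧ x ≤ y) ∨ (y ≤ x ∧ x ≤ a)) :
    |a - x| ≤ |a - y| := by
  rcases h with ⟨h1, h2⟩ | ⟨h1, h2⟩
  · rw [abs_of_nonpos (by linarith), abs_of_nonpos (by linarith)]; linarith
  · rw [abs_of_nonneg (by linarith), abs_of_nonneg (by linarith)]; linarith

/-- if `w(k)` is efficient for `A(k)`, then `w` is efficient for `A` iff
`min_{i ≠ k} w i / A i k ≤ w k ≤ max_{i ≠ k} w i / A i k`. -/
theorem efficient_extension_iff {n : ℕ} (hn : 2 ≤ n) (A : Matrix (Fin n) (Fin n) ℝ)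
    (hA : IsReciprocal A) (w : Fin n → ℝ) (hw : PosVec w) (k : Fin n)
    (hsub : IsEfficient (delMat A k) (delVec w k)) :
    IsEfficient A w ↔
      ((Finset.univ.erase k).inf' (erase_univ_nonempty hn k) (fun i => w i / A i k) ≤ w k ∧
        w k ≤ (Finset.univ.erase k).sup' (erase_univ_nonempty hn k) (fun i => w i / A i k)) := by
  obtain ⟨hApos, hArec⟩ := hA
  have hSne := erase_univ_nonempty hn k
  set m := (Finset.univ.erase k).inf' (erase_univ_nonempty hn k) (fun i => w i / A i k) with hmdef
  set M := (Finset.univ.erase k).sup' (erase_univ_nonempty hn k) (fun i => w i / A i k) with hMdef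
  obtain ⟨i0, hi0⟩ := hSne
  have hi0k : i0 ≠ k := (Finset.mem_erase.mp hi0).1
  constructor
  · intro heff
    have claim1 : m ≤ w k := by
      by_contra hcon
      push_neg at hcon  -- hcon : w k < m
      have hmpos : 0 < m := (hw k).trans hcon
      set v : Fin n → ℝ := Function.update w k m with hvdef
      have hvk : v k = m := Function.update_self k m w
      have hvo : ∀ i, i ≠ k → v i = w i := fun i hi => Function.update_of_ne hi m w
      have hvpos : PosVec v := by
        intro i
        by_cases hik : i = k
        · rw [hik, hvk]; exact hmpos
        · rw [hvo i hik]; exact hw i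
      have hdom : ∀ i j, |A i j - v i / v j| ≤ |A i j - w i / w j| := by
        intro i j
        rcases eq_or_ne i k with hik | hik <;> rcases eq_or_ne j k with hjk | hjk
        · rw [hik, hjk, hvk, div_self (ne_of_gt hmpos), div_self (ne_of_gt (hw k))]
        · rw [hik, hvk, hvo j hjk]
          have hkey : m ≤ w j / A j k :=
            Finset.inf'_le (fun i => w i / A i k) (Finset.mem_erase.mpr ⟨hjk, Finset.mem_univ j⟩)
          have hAkj : A k j = 1 / A j k := hArec j k
          have h1 : m / w j ≤ A k j := by
            rw [hAkj, div_le_div_iff₀ (hw j) (hApos j k)]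
            rw [le_div_iff₀ (hApos j k)] at hkey
            linarith
          have h2 : w k / w j ≤ m / w j := by
            gcongr <;> first | exact hw _ | exact (hw _).le | exact hcon.le
          exact abs_between' (Or.inr ⟨h2, h1⟩)
        · rw [hjk, hvk, hvo i hik]
          have hkey : m ≤ w i / A i k :=
            Finset.inf'_le (fun i => w i / A i k) (Finset.mem_erase.mpr ⟨hik, Finset.mem_univ i⟩)
          have h1 : A i k ≤ w i / m := by
            rw [le_div_iff₀ hmpos]
            rw [le_div_iff₀ (hApos i k)] at hkey
            linarith [mul_comm m (A i k)]
          have h2 : w i / m ≤ w i / w k := by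
            gcongr <;> first | exact hw _ | exact (hw _).le | exact hcon.le
          exact abs_between' (Or.inl ⟨h1, h2⟩)
        · rw [hvo i hik, hvo j hjk]
      obtain ⟨c, hc, hveq⟩ := heff.2 v hvpos hdom
      have h1 : v i0 = c * w i0 := by rw [hveq]; rfl
      rw [hvo i0 hi0k] at h1
      have hc1 : c = 1 :=
        mul_right_cancel₀ (ne_of_gt (hw i0)) (by rw [one_mul, ← h1])
      have h2 : v k = c * w k := by rw [hveq]; rfl
      rw [hvk, hc1, one_mul] at h2
      linarith
    have claim2 : w k ≤ M := by
      by_contra hcon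
      push_neg at hcon  -- hcon : M < w k
      have hMpos : 0 < M := by
        have h1 : (fun i => w i / A i k) i0 ≤ M := Finset.le_sup' (fun i => w i / A i k) hi0
        have h0 : 0 < w i0 / A i0 k := div_pos (hw i0) (hApos i0 k)
        simp only at h1
        linarith
      set v : Fin n → ℝ := Function.update w k M with hvdef
      have hvk : v k = M := Function.update_self k M w
      have hvo : ∀ i, i ≠ k → v i = w i := fun i hi => Function.update_of_ne hi M w
      have hvpos : PosVec v := by
        intro i
        by_cases hik : i = k
        · rw [hik, hvk]; exact hMpos
        · rw [hvo i hik]; exact hw i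
      have hdom : ∀ i j, |A i j - v i / v j| ≤ |A i j - w i / w j| := by
        intro i j
        rcases eq_or_ne i k with hik | hik <;> rcases eq_or_ne j k with hjk | hjk
        · rw [hik, hjk, hvk, div_self (ne_of_gt hMpos), div_self (ne_of_gt (hw k))]
        · rw [hik, hvk, hvo j hjk]
          have hkey : w j / A j k ≤ M :=
            Finset.le_sup' (fun i => w i / A i k) (Finset.mem_erase.mpr ⟨hjk, Finset.mem_univ j⟩)
          have hAkj : A k j = 1 / A j k := hArec j k
          have h1 : A k j ≤ M / w j := by
            rw [hAkj, div_le_div_iff₀ (hApos j k) (hw j)]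
            rw [div_le_iff₀ (hApos j k)] at hkey
            linarith [mul_comm M (A j k)]
          have h2 : M / w j ≤ w k / w j := by
            gcongr <;> first | exact hw _ | exact (hw _).le | exact hcon.le
          exact abs_between' (Or.inl ⟨h1, h2⟩)
        · rw [hjk, hvk, hvo i hik]
          have hkey : w i / A i k ≤ M :=
            Finset.le_sup' (fun i => w i / A i k) (Finset.mem_erase.mpr ⟨hik, Finset.mem_univ i⟩)
          have h1 : w i / M ≤ A i k := by
            rw [div_le_iff₀ hMpos]
            rw [div_le_iff₀ (hApos i k)] at hkey
            linarith [mul_comm (A i k) M]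
          have h2 : w i / w k ≤ w i / M := by
            gcongr <;> first | exact hw _ | exact (hw _).le | exact hcon.le
          exact abs_between' (Or.inr ⟨h2, h1⟩)
        · rw [hvo i hik, hvo j hjk]
      obtain ⟨c, hc, hveq⟩ := heff.2 v hvpos hdom
      have h1 : v i0 = c * w i0 := by rw [hveq]; rfl
      rw [hvo i0 hi0k] at h1
      have hc1 : c = 1 :=
        mul_right_cancel₀ (ne_of_gt (hw i0)) (by rw [one_mul, ← h1])
      have h2 : v k = c * w k := by rw [hveq]; rfl
      rw [hvk, hc1, one_mul] at h2
      linarith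
    exact ⟨claim1, claim2⟩
  · rintro ⟨h1, h2⟩
    refine ⟨hw, ?_⟩
    intro v hv hdom
    obtain ⟨c, hc, hveq⟩ := hsub.2 (delVec v k) (fun a => hv a.1)
      (fun a b => hdom a.1 b.1)
    have hvi : ∀ i, i ≠ k → v i = c * w i := by
      intro i hik
      have := congrFun hveq ⟨i, hik⟩
      simpa [delVec] using this
    have hvk : v k = c * w k := by
      rcases lt_trichotomy (v k) (c * w k) with hlt | heq | hgt
      · exfalso
        obtain ⟨i, hiS, hiv⟩ := Finset.exists_mem_eq_sup' (erase_univ_nonempty hn k)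
          (fun i => w i / A i k)
        have hik : i ≠ k := (Finset.mem_erase.mp hiS).1
        have hMw : w k ≤ w i / A i k := by rw [← hiv]; exact h2
        have hA1 : A i k ≤ w i / w k := by
          rw [le_div_iff₀ (hw k)]
          rw [le_div_iff₀ (hApos i k)] at hMw
          linarith [mul_comm (w k) (A i k)]
        have hratio : w i / w k < v i / v k := by
          rw [hvi i hik]
          calc w i / w k = c * w i / (c * w k) := by
                rw [mul_div_mul_left _ _ (ne_of_gt hc)]
            _ < c * w i / v k := by
                gcongr
                · exact mul_pos hc (hw i)
                · exact hv k
        have hd := hdom i k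
        rw [abs_of_nonpos (by linarith), abs_of_nonpos (by linarith)] at hd
        linarith
      · exact heq
      · exfalso
        obtain ⟨i, hiS, hiv⟩ := Finset.exists_mem_eq_inf' (erase_univ_nonempty hn k)
          (fun i => w i / A i k)
        have hik : i ≠ k := (Finset.mem_erase.mp hiS).1
        have hmw : w i / A i k ≤ w k := by rw [← hiv]; exact h1
        have hA1 : w i / w k ≤ A i k := by
          rw [div_le_iff₀ (hw k)]
          rw [div_le_iff₀ (hApos i k)] at hmw
          linarith [mul_comm (w k) (A i k)]
        have hratio : v i / v k < w i / w k := by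
          rw [hvi i hik]
          calc c * w i / v k < c * w i / (c * w k) := by
                gcongr
                · exact mul_pos hc (hw i)
                · exact mul_pos hc (hw k)
            _ = w i / w k := by rw [mul_div_mul_left _ _ (ne_of_gt hc)]
        have hd := hdom i k
        rw [abs_of_nonneg (by linarith), abs_of_nonneg (by linarith)] at hd
        linarith
    refine ⟨c, hc, ?_⟩
    funext i
    by_cases hik : i = k
    · subst hik; simpa using hvk
    · simpa using hvi i hik
end

section
/- Let G be a strongly connected semi-complete directed graph on n ≥ 3 vertices. Then every vertex of G is contained in a directed cycle of length k, for each k = 3, …, n. -/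
/-- A digraph (edge relation) is semi-complete if between any two distinct vertices there is
an edge in at least one direction. -/
def SemiComplete {V : Type*} (r : V → V → Prop) : Prop :=
  ∀ i j : V, i ≠ j → (r i j ∨ r j i)

/-- A digraph is strongly connected if for every pair of distinct vertices there is a
directed path from one to the other. -/
def StronglyConnected {V : Type*} (r : V → V → Prop) : Prop :=
  ∀ i j : V, i ≠ j → Relation.ReflTransGen r i j

/-!
Moon's argument, by induction on the length. Let `C` be a `k`-cycle through `v` with `k < n`.
If some vertex `w` off `C` has both an in-neighbour and an out-neighbour on `C`, then walking
around `C` and using semi-completeness one finds consecutive `cᵢ → w → cᵢ₊₁`, and `w` can be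
inserted. Otherwise every vertex off `C` is dominated by all of `C` or dominates all of `C`;
strong connectivity produces a dominated `u` and a dominating `z` with `u → z`, and replacing the
predecessor of `v` on `C` by `u, z` gives a `(k + 1)`-cycle through `v`. A triangle through `v`
comes from the same dichotomy for `C = {v}`, unless `v` lies on a 2-cycle, which is extended as
above.
-/

open Function Set

variable {V : Type*} {r : V → V → Prop}

theorem Relation.ReflTransGen.exists_rel_mem_notMem {S : Set V} {a b : V}
    (h : Relation.ReflTransGen r a b) (ha : a ∈ S) (hb : b ∉ S) :
    ∃ x ∈ S, ∃ y ∉ S, r x y := by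
  induction h with
  | refl => exact absurd ha hb
  | @tail c d _ hcd ih =>
    by_cases hc : c ∈ S
    · exact ⟨c, hc, d, hb, hcd⟩
    · exact ih hc

theorem StronglyConnected.exists_rel_mem_notMem (hsc : StronglyConnected r) {S : Set V}
    {a b : V} (ha : a ∈ S) (hb : b ∉ S) : ∃ x ∈ S, ∃ y ∉ S, r x y :=
  (hsc a b (ne_of_mem_of_not_mem ha hb)).exists_rel_mem_notMem ha hb

theorem ZMod.forall_of_add_one {k : ℕ} [NeZero k] {P : ZMod k → Prop} {a : ZMod k} (ha : P a)
    (h : ∀ i, P i → P (i + 1)) (j : ZMod k) : P j := by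
  have key (l : ℕ) : P (a + l) := by
    induction l with
    | zero => simpa using ha
    | succ l ih => simpa [add_assoc] using h _ ih
  simpa using key (j - a).val

theorem ZMod.natCast_self_sub {k m : ℕ} (h : m ≤ k) : ((k - m : ℕ) : ZMod k) = -m := by
  rw [Nat.cast_sub h, ZMod.natCast_self, zero_sub]

def IsDicycle (r : V → V → Prop) {k : ℕ} (c : ZMod k → V) : Prop :=
  Injective c ∧ ∀ i, r (c i) (c (i + 1))

-- Only `f 0, …, f (m - 1)` are read, so that appending a vertex is a `Function.update`.
def IsDipath (r : V → V → Prop) (f : ℕ → V) (m : ℕ) : Prop :=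
  InjOn f (Iio m) ∧ ∀ i, i + 1 < m → r (f i) (f (i + 1))

namespace IsDipath

variable {f : ℕ → V} {m : ℕ}

theorem mono (h : IsDipath r f m) {m' : ℕ} (hm : m' ≤ m) : IsDipath r f m' :=
  ⟨h.1.mono (Iio_subset_Iio hm), fun i hi => h.2 i (by omega)⟩

theorem update (h : IsDipath r f m) {x : V} (hx : x ∉ f '' Iio m) (hm : 0 < m)
    (hr : r (f (m - 1)) x) : IsDipath r (Function.update f m x) (m + 1) := by
  have heq : EqOn (Function.update f m x) f (Iio m) := fun i hi => update_of_ne (ne_of_lt hi) _ _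
  refine ⟨?_, fun i hi => ?_⟩
  · rw [Iio_add_one_eq_Iic, ← Iio_insert, injOn_insert (by simp)]
    exact ⟨h.1.congr heq.symm, by rwa [update_self, heq.image_eq]⟩
  · rcases (by omega : i + 1 < m ∨ i + 1 = m) with hi | hi
    · rw [heq (mem_Iio.2 (by omega)), heq hi]
      exact h.2 i hi
    · rw [heq (mem_Iio.2 (by omega)), hi, update_self]
      rwa [show i = m - 1 by omega]

theorem exists_isDicycle [NeZero m] (h : IsDipath r f m) (hr : r (f (m - 1)) (f 0)) :
    ∃ c : ZMod m → V, IsDicycle r c ∧ ∀ l < m, f l ∈ range c := by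
  refine ⟨fun t => f t.val, ⟨fun s t hst => ZMod.val_injective m
    (h.1 (ZMod.val_lt s) (ZMod.val_lt t) hst), fun t => ?_⟩,
    fun l hl => ⟨l, by simp [ZMod.val_cast_of_lt hl]⟩⟩
  have hval : (t + 1).val = (t.val + 1) % m := by
    rw [← ZMod.val_natCast, Nat.cast_add_one, ZMod.natCast_zmod_val]
  have ht := ZMod.val_lt t
  rcases (by omega : t.val + 1 < m ∨ t.val = m - 1) with ht' | ht'
  · simpa only [hval, Nat.mod_eq_of_lt ht'] using h.2 _ ht'
  · simpa only [hval, ht', Nat.sub_add_cancel (NeZero.one_le), Nat.mod_self] using hr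

end IsDipath

theorem SemiComplete.exists_rel_rel_add_one (hsemi : SemiComplete r) {k : ℕ} [NeZero k]
    {c : ZMod k → V} {w : V} (hw : w ∉ range c) {a b : ZMod k} (ha : r (c a) w)
    (hb : r w (c b)) : ∃ i, r (c i) w ∧ r w (c (i + 1)) := by
  by_contra! hno
  have hall : ∀ j, r (c j) w := ZMod.forall_of_add_one ha fun i hi =>
    (hsemi _ _ fun h => hw ⟨_, h⟩).resolve_right (hno i hi)
  exact hno (b - 1) (hall _) (by rwa [sub_add_cancel])

theorem exists_dominated_rel_dominating (hsemi : SemiComplete r) (hsc : StronglyConnected r)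
    {C : Set V} {a b : V} (ha : a ∈ C) (hb : b ∉ C)
    (hC : ∀ x ∉ C, ∀ y ∈ C, r y x → ∀ y' ∈ C, ¬ r x y') :
    ∃ u ∉ C, ∃ z ∉ C, u ≠ z ∧ (∀ y ∈ C, r y u) ∧ r u z ∧ ∀ y ∈ C, r z y := by
  obtain ⟨y, hy, x, hx, hyx⟩ := hsc.exists_rel_mem_notMem ha hb
  obtain ⟨u, ⟨huC, y₀, hy₀, hy₀u⟩, z, hzA, huz⟩ := hsc.exists_rel_mem_notMem
    (S := {x | x ∉ C ∧ ∃ y ∈ C, r y x}) ⟨hx, y, hy, hyx⟩ fun h => h.1 ha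
  have hu : ∀ y ∈ C, ¬ r u y := hC u huC y₀ hy₀ hy₀u
  have hzC : z ∉ C := fun hz => hu z hz huz
  have hz : ∀ y ∈ C, ¬ r y z := fun y hy hyz => hzA ⟨hzC, y, hy, hyz⟩
  refine ⟨u, huC, z, hzC, ?_, fun y hy => ?_, huz, fun y hy => ?_⟩
  · rintro rfl
    exact hzA ⟨huC, y₀, hy₀, hy₀u⟩
  · exact (hsemi u y (ne_of_mem_of_not_mem hy huC).symm).resolve_left (hu y hy)
  · exact (hsemi y z (ne_of_mem_of_not_mem hy hzC)).resolve_left (hz y hy)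

theorem isDicycle_two {x y : V} (hxy : x ≠ y) (h₁ : r x y) (h₂ : r y x) :
    IsDicycle (k := 2) r ![x, y] := by
  refine ⟨fun s t hst => ?_, fun s => ?_⟩
  · fin_cases s <;> fin_cases t <;> first | rfl | simp_all [eq_comm]
  · fin_cases s <;> assumption

theorem isDicycle_three {x y z : V} (hxy : x ≠ y) (hyz : y ≠ z) (hzx : z ≠ x) (h₁ : r x y)
    (h₂ : r y z) (h₃ : r z x) :
    IsDicycle (k := 3) r ![x, y, z] := by
  refine ⟨fun s t hst => ?_, fun s => ?_⟩
  · fin_cases s <;> fin_cases t <;> first | rfl | simp_all [eq_comm]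
  · fin_cases s <;> assumption

namespace IsDicycle

variable {k : ℕ} {c : ZMod k → V}

theorem isDipath_add (hc : IsDicycle r c) (j : ZMod k) :
    IsDipath r (fun l : ℕ => c (j + l)) k := by
  refine ⟨fun s hs t ht hst => ?_, fun i _ => by simpa [add_assoc] using hc.2 (j + i)⟩
  have := congrArg ZMod.val (add_left_cancel (hc.1 hst))
  rwa [ZMod.val_cast_of_lt hs, ZMod.val_cast_of_lt ht] at this

theorem exists_insert [NeZero k] (hc : IsDicycle r c) {w : V} (hw : w ∉ range c) {i : ZMod k}
    (h₁ : r (c i) w) (h₂ : r w (c (i + 1))) :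
    ∃ c' : ZMod (k + 1) → V, IsDicycle r c' ∧ range c ⊆ range c' := by
  have hk : 0 < k := Nat.pos_of_neZero k
  have hlast : i + 1 + ((k - 1 : ℕ) : ZMod k) = i := by
    rw [ZMod.natCast_self_sub hk]; push_cast; ring
  -- the path `c (i + 1), …, c i`, followed by `w`
  have hf := (hc.isDipath_add (i + 1)).update (x := w) (by rintro ⟨l, -, hl⟩; exact hw ⟨_, hl⟩)
    hk (by rwa [hlast])
  obtain ⟨c', hc', hrange⟩ := hf.exists_isDicycle (by simpa [update_of_ne hk.ne] using h₂)
  refine ⟨c', hc', ?_⟩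
  rintro _ ⟨j, rfl⟩
  have := hrange (j - (i + 1)).val (by have := ZMod.val_lt (j - (i + 1)); omega)
  simpa [update_of_ne (ZMod.val_lt (j - (i + 1))).ne] using this

theorem exists_replace (hk : 2 ≤ k) (hc : IsDicycle r c) {u z : V} (hu : u ∉ range c)
    (hz : z ∉ range c) (huz : u ≠ z) {i : ZMod k} (h₁ : r (c (i - 1)) u) (h₂ : r u z)
    (h₃ : r z (c (i + 1))) :
    ∃ c' : ZMod (k + 1) → V, IsDicycle r c' ∧ ∀ j ≠ i, c j ∈ range c' := by
  have : NeZero k := ⟨by omega⟩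
  have hlast : i + 1 + ((k - 2 : ℕ) : ZMod k) = i - 1 := by
    rw [ZMod.natCast_self_sub hk]; push_cast; ring
  -- the path `c (i + 1), …, c (i - 1)`, followed by `u` and `z`
  have hf₁ := ((hc.isDipath_add (i + 1)).mono (Nat.sub_le k 1)).update (x := u)
    (by rintro ⟨l, -, hl⟩; exact hu ⟨_, hl⟩) (by omega)
    (by rwa [show k - 1 - 1 = k - 2 by omega, hlast])
  rw [Nat.sub_add_cancel (by omega)] at hf₁
  have hf₂ := hf₁.update (x := z) ?_ (by omega) (by simpa)
  · obtain ⟨c', hc', hrange⟩ := hf₂.exists_isDicycle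
      (by simpa [update_of_ne (by omega : 0 ≠ k), update_of_ne (by omega : 0 ≠ k - 1)] using h₃)
    refine ⟨c', hc', fun j hj => ?_⟩
    have hl : (j - (i + 1)).val ≠ k - 1 := by
      intro h
      apply hj
      have := ZMod.natCast_zmod_val (j - (i + 1))
      rw [h, ZMod.natCast_self_sub (by omega)] at this
      linear_combination -this
    have := hrange (j - (i + 1)).val (by have := ZMod.val_lt (j - (i + 1)); omega)
    simpa [update_of_ne (ZMod.val_lt (j - (i + 1))).ne, update_of_ne hl] using this
  · rintro ⟨l, hl, hlz⟩
    rcases eq_or_ne l (k - 1) with rfl | hne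
    · exact huz (by simpa using hlz)
    · exact hz ⟨_, by simpa [update_of_ne hne] using hlz⟩

theorem exists_succ (hsemi : SemiComplete r) (hsc : StronglyConnected r) (hk : 2 ≤ k)
    (hc : IsDicycle r c) {w : V} (hw : w ∉ range c) {v : V} (hv : v ∈ range c) :
    ∃ c' : ZMod (k + 1) → V, IsDicycle r c' ∧ v ∈ range c' := by
  have : NeZero k := ⟨by omega⟩
  by_cases hdetour : ∃ x ∉ range c, ∃ a b, r (c a) x ∧ r x (c b)
  · obtain ⟨x, hx, a, b, hax, hxb⟩ := hdetour
    obtain ⟨i, h₁, h₂⟩ := hsemi.exists_rel_rel_add_one hx hax hxb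
    obtain ⟨c', hc', hsub⟩ := hc.exists_insert hx h₁ h₂
    exact ⟨c', hc', hsub hv⟩
  · push Not at hdetour
    obtain ⟨i, rfl⟩ := hv
    obtain ⟨u, hu, z, hz, huz, hcu, huz', hzc⟩ := exists_dominated_rel_dominating hsemi hsc
      (mem_range_self i) hw <| by
        rintro x hx _ ⟨a, rfl⟩ hax _ ⟨b, rfl⟩
        exact hdetour x hx a b hax
    obtain ⟨c', hc', hsub⟩ := hc.exists_replace hk hu hz huz (i := i - 1)
      (hcu _ (mem_range_self _)) huz' (by simpa using hzc _ (mem_range_self i))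
    have : Fact (1 < k) := ⟨hk⟩
    exact ⟨c', hc', hsub i fun h => one_ne_zero (sub_eq_self.mp h.symm)⟩

end IsDicycle

theorem Fintype.exists_notMem_range_of_card_lt {α : Type*} [Fintype α] [Fintype V] (f : α → V)
    (h : Fintype.card α < Fintype.card V) : ∃ w, w ∉ range f := by
  by_contra! hsurj
  exact (Fintype.card_le_of_surjective f hsurj).not_gt h

theorem exists_isDicycle_three [Fintype V] (hV : 3 ≤ Fintype.card V) (hsemi : SemiComplete r)
    (hsc : StronglyConnected r) (v : V) : ∃ c : ZMod 3 → V, IsDicycle r c ∧ v ∈ range c := by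
  by_cases h₂ : ∃ x ≠ v, r v x ∧ r x v
  · obtain ⟨x, hxv, hvx, hxv'⟩ := h₂
    obtain ⟨w, hw⟩ := Fintype.exists_notMem_range_of_card_lt (α := ZMod 2) ![v, x] (by simpa)
    exact (isDicycle_two hxv.symm hvx hxv').exists_succ hsemi hsc le_rfl hw ⟨0, rfl⟩
  · push Not at h₂
    obtain ⟨b, hb⟩ := Fintype.exists_ne_of_one_lt_card (by omega) v
    obtain ⟨u, hu, z, hz, huz, hvu, huz', hzv⟩ := exists_dominated_rel_dominating hsemi hsc
      (mem_singleton v) hb fun x hx _ hy hvx _ hy' => by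
        rw [mem_singleton_iff] at hx hy hy'
        subst hy hy'
        exact h₂ x hx hvx
    simp only [mem_singleton_iff] at hu hz hvu hzv
    exact ⟨_, isDicycle_three (Ne.symm hu) huz hz (hvu v rfl) huz' (hzv v rfl), 0, rfl⟩

theorem exists_isDicycle_of_le_card [Fintype V] (hsemi : SemiComplete r)
    (hsc : StronglyConnected r) (v : V) {k : ℕ} (hk3 : 3 ≤ k) (hk : k ≤ Fintype.card V) :
    ∃ c : ZMod k → V, IsDicycle r c ∧ v ∈ range c := by
  induction k, hk3 using Nat.le_induction with
  | base => exact exists_isDicycle_three hk hsemi hsc v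
  | succ k hk3 ih =>
    obtain ⟨c, hc, hv⟩ := ih (by omega)
    have : NeZero k := ⟨by omega⟩
    obtain ⟨w, hw⟩ := Fintype.exists_notMem_range_of_card_lt c (by rw [ZMod.card]; omega)
    exact hc.exists_succ hsemi hsc (by omega) hw hv

theorem vertex_pancyclic_of_stronglyConnected_semiComplete_general {n : ℕ}
    (r : Fin n → Fin n → Prop) (hsemi : SemiComplete r) (hsc : StronglyConnected r)
    (v : Fin n) (k : ℕ) (hk3 : 3 ≤ k) (hkn : k ≤ n) :
    ∃ c : ZMod k → Fin n, Function.Injective c ∧ (∀ i : ZMod k, r (c i) (c (i + 1))) ∧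
      ∃ i : ZMod k, c i = v := by
  obtain ⟨c, ⟨hinj, hedge⟩, hv⟩ :=
    exists_isDicycle_of_le_card hsemi hsc v hk3 (by simpa using hkn)
  exact ⟨c, hinj, hedge, hv⟩

/-- Moon: in a strongly connected semi-complete digraph on `n ≥ 3` vertices,
every vertex lies on a directed cycle of length `k` for each `k = 3, …, n`. -/
theorem vertex_pancyclic_of_stronglyConnected_semiComplete {n : ℕ} (hn : 3 ≤ n)
    (r : Fin n → Fin n → Prop) (hsemi : SemiComplete r) (hsc : StronglyConnected r)
    (v : Fin n) (k : ℕ) (hk3 : 3 ≤ k) (hkn : k ≤ n) :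
    ∃ c : ZMod k → Fin n, Function.Injective c ∧ (∀ i : ZMod k, r (c i) (c (i + 1))) ∧
      ∃ i : ZMod k, c i = v :=
  vertex_pancyclic_of_stronglyConnected_semiComplete_general r hsemi hsc v k hk3 hkn
end

section
/- Every strongly connected semi-complete directed graph on n ≥ 3 vertices contains a directed cycle passing through all n vertices (a directed Hamiltonian cycle). -/
/-!
Grow a simple cycle `C` until it covers every vertex. An outside vertex `u` with an edge from
`C` and an edge into `C` can be inserted: walk along `C` from a vertex `v → u` to the first
vertex `y` with `u → y`; its predecessor `x` has no edge from `u`, hence `x → u` by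
semi-completeness, and `x → u → y` replaces `x → y`. Otherwise every outside vertex either has no edge
into `C` (class `A`) or no edge from `C` (class `B`), and by semi-completeness an `A`-vertex
receives an edge from every vertex of `C` while a `B`-vertex sends one to each. Strong
connectivity forces an edge `x → y` from `A` to `B`, and `v → x → y → w` then absorbs both
into `C`. The first cycle is extracted from the closed walk `p → q →* p`.
-/

theorem Relation.ReflTransGen.exists_rel_of_pred_of_not_pred {α : Type*} {r : α → α → Prop}
    {P : α → Prop} {a b : α} (h : ReflTransGen r a b) (ha : P a) (hb : ¬ P b) :
    ∃ x y, P x ∧ ¬ P y ∧ r x y := by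
  induction h with
  | refl => exact absurd ha hb
  | @tail c d _ hcd ih =>
    by_cases hc : P c
    · exact ⟨c, d, hc, hb, hcd⟩
    · exact ih hc

namespace Cycle

variable {α : Type*} {r : α → α → Prop}

theorem exists_eq_coe_cons_of_mem {s : Cycle α} {a : α} (h : a ∈ s) :
    ∃ l : List α, s = ↑(a :: l) := by
  induction s using Quotient.inductionOn' with | _ l
  obtain ⟨p, q, rfl⟩ := List.append_of_mem (mem_coe_iff.mp h)
  exact ⟨q ++ p, coe_eq_coe.mpr List.isRotated_append⟩

theorem exists_mem_of_ne_nil {s : Cycle α} (h : s ≠ nil) : ∃ a, a ∈ s := by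
  induction s with
  | nil => exact absurd rfl h
  | cons a l _ => exact ⟨a, mem_coe_iff.mpr List.mem_cons_self⟩

theorem Nodup.length_le_card [Fintype α] {s : Cycle α} (h : s.Nodup) :
    s.length ≤ Fintype.card α := by
  induction s using Quotient.inductionOn' with | _ l
  exact List.Nodup.length_le_card h

theorem exists_notMem_of_length_lt_card [Fintype α] {s : Cycle α}
    (h : s.length < Fintype.card α) : ∃ a, a ∉ s := by
  classical
  induction s using Quotient.inductionOn' with | _ l
  by_contra! hall
  have huniv : Finset.univ ⊆ l.toFinset := fun a _ => List.mem_toFinset.mpr (hall a)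
  have := (Finset.card_le_card huniv).trans (List.toFinset_card_le l)
  exact absurd h (by simpa using this)

theorem chain_coe_iff_forall_getElem {l : List α} :
    Chain r (l : Cycle α) ↔
      ∀ i (hi : i < l.length), r l[i] (l[(i + 1) % l.length]'(Nat.mod_lt _ (by omega))) := by
  rcases l with - | ⟨a, m⟩
  · simp
  · have hrot : m ++ [a] = (a :: m).rotate 1 := by simp
    rw [chain_coe_cons, ← List.cons_append, List.isChain_cons_append_singleton_iff_forall₂, hrot,
      List.forall₂_iff_get]
    simp only [List.length_rotate, List.get_eq_getElem, List.getElem_rotate, true_and]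
    exact ⟨fun h i hi => h i hi hi, fun h i hi _ => h i hi⟩

theorem Chain.exists_longer_insert_pair {s : Cycle α} (hs : s.Chain r)
    (hnd : s.Nodup) {a x y : α} (ha : a ∈ s) (hx : x ∉ s) (hy : y ∉ s) (hne : x ≠ y)
    (hax : r a x) (hxy : r x y) (hys : ∀ v ∈ s, r y v) :
    ∃ s' : Cycle α, s'.Chain r ∧ s'.Nodup ∧ s.length < s'.length := by
  obtain ⟨l, rfl⟩ := exists_eq_coe_cons_of_mem ha
  simp only [mem_coe_iff] at hx hy
  refine ⟨↑(a :: x :: y :: l), ?_, ?_, by simp⟩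
  · refine List.isChain_cons_cons.mpr ⟨hax, List.isChain_cons_cons.mpr ⟨hxy, ?_⟩⟩
    refine List.isChain_cons.mpr ⟨fun b hb => hys b ?_, (List.isChain_cons.mp hs).2⟩
    exact (List.perm_append_singleton a l).subset (List.mem_of_mem_head? hb)
  · grind [Cycle.nodup_coe_iff, List.nodup_cons]

theorem Chain.exists_nodup {s : Cycle α} (hs : s.Chain r) (hne : s ≠ Cycle.nil) :
    ∃ s' : Cycle α, s'.Chain r ∧ s'.Nodup ∧ s' ≠ Cycle.nil := by
  induction hk : s.length using Nat.strong_induction_on generalizing s with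
  | _ k ih =>
  induction s using Quotient.inductionOn' with | _ l
  simp only [mk''_eq_coe] at hs hne hk
  by_cases hnd : l.Nodup
  · exact ⟨l, hs, hnd, hne⟩
  obtain ⟨x, p, q, t, rfl⟩ : ∃ x p q t, l = p ++ x :: (q ++ x :: t) := by
    obtain ⟨x, hx⟩ := List.exists_duplicate_iff_not_nodup.mpr hnd
    obtain ⟨l₁, l₂, rfl, h₁, h₂⟩ := List.cons_sublist_iff.mp (List.duplicate_iff_sublist.mp hx)
    obtain ⟨p, m, rfl⟩ := List.append_of_mem h₁
    obtain ⟨q, t, rfl⟩ := List.append_of_mem (List.singleton_sublist.mp h₂)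
    exact ⟨x, p, m ++ q, t, by simp⟩
  -- rotating the duplicate `x` to the front exposes the shorter closed walk `x :: q`
  have hrot : ((p ++ x :: (q ++ x :: t) : List α) : Cycle α) = ↑(x :: (q ++ x :: (t ++ p))) :=
    coe_eq_coe.mpr (by simpa using List.isRotated_append (l := p) (l' := x :: (q ++ x :: t)))
  rw [hrot, chain_coe_cons] at hs
  have hcyc : Chain r ↑(x :: q) := (List.isChain_cons_split.mp (by simpa using hs)).1
  refine ih (x :: q).length ?_ hcyc (by simp) rfl
  simp only [length_coe, List.length_append, List.length_cons] at hk
  simp only [List.length_cons]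
  omega

theorem Chain.exists_injective_zmod {n : ℕ} [NeZero n]
    {s : Cycle α} (hs : s.Chain r) (hnd : s.Nodup) (hlen : s.length = n) :
    ∃ c : ZMod n → α, Function.Injective c ∧ ∀ i, r (c i) (c (i + 1)) := by
  induction s using Quotient.inductionOn' with | _ l
  change l.length = n at hlen
  subst hlen
  refine ⟨fun i => l[i.val]'(ZMod.val_lt i), fun i j hij => ?_, fun i => ?_⟩
  · exact ZMod.val_injective _ ((List.Nodup.getElem_inj_iff hnd).mp hij)
  · have hval : (i + 1).val = (i.val + 1) % l.length := by
      rw [ZMod.val_add, ZMod.val_one_eq_one_mod, Nat.add_mod_mod]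
    simpa only [hval] using chain_coe_iff_forall_getElem.mp hs i.val (ZMod.val_lt i)

end Cycle

namespace SemiComplete

variable {V : Type*} {r : V → V → Prop}

theorem exists_perm_isChain_insert (hr : SemiComplete r) {x u w e : V} {l : List V}
    (hl : List.IsChain r (x :: (l ++ [e]))) (hxu : r x u) (hu : u ∉ l ++ [e])
    (hw : w ∈ l ++ [e]) (huw : r u w) :
    ∃ l', l'.Perm (u :: l) ∧ List.IsChain r (x :: (l' ++ [e])) := by
  induction l generalizing x with
  | nil =>
    obtain rfl : w = e := by simpa using hw
    exact ⟨[u], List.Perm.refl _, List.isChain_cons_cons.mpr ⟨hxu, by simpa using huw⟩⟩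
  | cons y l ih =>
    rw [List.cons_append, List.isChain_cons_cons] at hl
    by_cases huy : r u y
    · refine ⟨u :: y :: l, List.Perm.refl _, ?_⟩
      exact List.isChain_cons_cons.mpr ⟨hxu, List.isChain_cons_cons.mpr ⟨huy, hl.2⟩⟩
    · have hyu : r y u := (hr y u (by rintro rfl; simp at hu)).resolve_right huy
      have hw' : w ∈ l ++ [e] := by
        rcases List.mem_cons.mp hw with rfl | hw
        · exact absurd huw huy
        · exact hw
      obtain ⟨l', hperm, hl'⟩ := ih hl.2 hyu (by simp_all) hw'
      exact ⟨y :: l', (hperm.cons y).trans (List.Perm.swap _ _ _),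
        List.isChain_cons_cons.mpr ⟨hl.1, hl'⟩⟩

theorem exists_longer_cycle_insert (hr : SemiComplete r) {s : Cycle V} (hs : s.Chain r)
    (hnd : s.Nodup) {u v w : V} (hu : u ∉ s) (hv : v ∈ s) (hw : w ∈ s) (hvu : r v u)
    (huw : r u w) : ∃ s' : Cycle V, s'.Chain r ∧ s'.Nodup ∧ s.length < s'.length := by
  obtain ⟨l, rfl⟩ := Cycle.exists_eq_coe_cons_of_mem hv
  simp only [Cycle.mem_coe_iff] at hu hw
  have hw' : w ∈ l ++ [v] := (List.perm_append_singleton v l).symm.subset hw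
  obtain ⟨l', hperm, hl'⟩ := hr.exists_perm_isChain_insert hs hvu (by simp_all) hw' huw
  have hperm' : (v :: l').Perm (u :: v :: l) := (hperm.cons v).trans (List.Perm.swap _ _ _)
  refine ⟨↑(v :: l'), hl', hperm'.nodup_iff.mpr (List.nodup_cons.mpr ⟨hu, hnd⟩), ?_⟩
  simp [Cycle.length_coe, hperm'.length_eq]

theorem exists_longer_cycle (hr : SemiComplete r) (hsc : StronglyConnected r) {s : Cycle V}
    (hs : s.Chain r) (hnd : s.Nodup) {a u₀ : V} (ha : a ∈ s) (hu₀ : u₀ ∉ s) :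
    ∃ s' : Cycle V, s'.Chain r ∧ s'.Nodup ∧ s.length < s'.length := by
  by_cases hins : ∃ u ∉ s, ∃ v ∈ s, ∃ w ∈ s, r v u ∧ r u w
  · obtain ⟨u, hu, v, hv, w, hw, hvu, huw⟩ := hins
    exact hr.exists_longer_cycle_insert hs hnd hu hv hw hvu huw
  push Not at hins
  set A := fun u => u ∉ s ∧ ∀ v ∈ s, ¬ r u v
  set B := fun u => u ∉ s ∧ ∀ v ∈ s, ¬ r v u
  have hAB : ∀ u ∉ s, A u ∨ B u := by
    intro u hu
    by_cases h : ∃ v ∈ s, r v u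
    · obtain ⟨v, hv, hvu⟩ := h
      exact Or.inl ⟨hu, fun w hw huw => hins u hu v hv w hw hvu huw⟩
    · push Not at h
      exact Or.inr ⟨hu, h⟩
  have hne : ∀ {x y}, x ∈ s → y ∉ s → x ≠ y := fun hx hy h => hy (h ▸ hx)
  suffices ∃ x y, A x ∧ B y ∧ r x y by
    obtain ⟨x, y, ⟨hx, hxs⟩, ⟨hy, hys⟩, hxy⟩ := this
    have hxy_ne : x ≠ y := by
      rintro rfl
      exact (hr a x (hne ha hx)).elim (hys a ha) (hxs a ha)
    exact hs.exists_longer_insert_pair hnd ha hx hy hxy_ne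
      ((hr a x (hne ha hx)).resolve_right (hxs a ha)) hxy
      (fun v hv => (hr y v (hne hv hy).symm).resolve_right (hys v hv))
  by_cases hA : ∃ x, A x
  · obtain ⟨x, hx⟩ := hA
    obtain ⟨y, z, hy, hz, hyz⟩ :=
      (hsc x a (hne ha hx.1).symm).exists_rel_of_pred_of_not_pred hx (fun h => h.1 ha)
    have hzs : z ∉ s := fun h => hy.2 z h hyz
    exact ⟨y, z, hy, (hAB z hzs).resolve_left hz, hyz⟩
  · have hB : B u₀ := (hAB u₀ hu₀).resolve_left (fun h => hA ⟨u₀, h⟩)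
    obtain ⟨y, z, hy, hz, hyz⟩ := (hsc a u₀ (hne ha hu₀)).exists_rel_of_pred_of_not_pred
      (P := fun u => ¬ B u) (fun h => h.1 ha) (not_not.mpr hB)
    have hys : y ∉ s := fun h => (not_not.mp hz).2 y h hyz
    exact ⟨y, z, (hAB y hys).resolve_right hy, not_not.mp hz, hyz⟩

theorem exists_cycle_length_eq_card [Fintype V] (hr : SemiComplete r) (hsc : StronglyConnected r)
    {s : Cycle V} (hs : s.Chain r) (hnd : s.Nodup) (hne : s ≠ Cycle.nil) :
    ∃ s' : Cycle V, s'.Chain r ∧ s'.Nodup ∧ s'.length = Fintype.card V := by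
  induction hk : Fintype.card V - s.length using Nat.strong_induction_on generalizing s with
  | _ k ih =>
  rcases hnd.length_le_card.eq_or_lt with hlen | hlen
  · exact ⟨s, hs, hnd, hlen⟩
  obtain ⟨u, hu⟩ := Cycle.exists_notMem_of_length_lt_card hlen
  obtain ⟨a, ha⟩ := Cycle.exists_mem_of_ne_nil hne
  obtain ⟨s', hs', hnd', hlt⟩ := hr.exists_longer_cycle hsc hs hnd ha hu
  exact ih _ (by omega) hs' hnd' (by rintro rfl; simp at hlt) rfl

end SemiComplete

/-- every strongly connected semi-complete digraph on `n ≥ 3` vertices has a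
directed Hamiltonian cycle. -/
theorem hamiltonian_cycle_of_stronglyConnected_semiComplete {n : ℕ} (hn : 3 ≤ n)
    (r : Fin n → Fin n → Prop) (hsemi : SemiComplete r) (hsc : StronglyConnected r) :
    ∃ c : ZMod n → Fin n, Function.Bijective c ∧ ∀ i : ZMod n, r (c i) (c (i + 1)) := by
  have : NeZero n := ⟨by omega⟩
  obtain ⟨p, q, hpq, hrpq⟩ : ∃ p q : Fin n, p ≠ q ∧ r p q := by
    have h01 : (⟨0, by omega⟩ : Fin n) ≠ ⟨1, by omega⟩ := by simp [Fin.ext_iff]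
    rcases hsemi _ _ h01 with h | h
    exacts [⟨_, _, h01, h⟩, ⟨_, _, h01.symm, h⟩]
  obtain ⟨l, hl, hlast⟩ := List.exists_isChain_cons_of_relationReflTransGen (hsc q p hpq.symm)
  have hwalk : Cycle.Chain r ↑(q :: l) := by
    rw [Cycle.chain_ne_nil r (List.cons_ne_nil q l), hlast]
    exact List.isChain_cons_cons.mpr ⟨hrpq, hl⟩
  obtain ⟨s₀, hs₀, hnd₀, hne₀⟩ := hwalk.exists_nodup (by simp)
  obtain ⟨s, hs, hnd, hlen⟩ := hsemi.exists_cycle_length_eq_card hsc hs₀ hnd₀ hne₀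
  obtain ⟨c, hinj, hc⟩ := hs.exists_injective_zmod hnd (hlen.trans (Fintype.card_fin n))
  exact ⟨c, (Fintype.bijective_iff_injective_and_card c).mpr ⟨hinj, by simp [ZMod.card]⟩, hc⟩
end

section
/- Let A be an n-by-n reciprocal matrix with n ≥ 4, and let w be an efficient vector for A. Then there exist i, j ∈ {1,…,n} with i ≠ j such that w(i) is efficient for A(i) and w(j) is efficient for A(j); that is, w ∈ E(A;i) ∩ E(A;j). -/
/-- `E(A)`, the set of efficient vectors for `A`. -/
def Eset {ι : Type*} (A : Matrix ι ι ℝ) : Set (ι → ℝ) := {w | IsEfficient A w}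

/-- `E(A; i)`, the set of efficient vectors `w` for `A` such that `w(i)` is efficient
for `A(i)`. -/
def EsetSub {n : ℕ} (A : Matrix (Fin n) (Fin n) ℝ) (i : Fin n) : Set (Fin n → ℝ) :=
  {w | IsEfficient A w ∧ IsEfficient (delMat A i) (delVec w i)}

/-!
By the theorem of Blanquero, Carrizosa and Conde, a positive `w` is efficient for a reciprocal `A`
iff the digraph `G(A, w)`, with an arc `i → j` whenever `w i / w j ≥ A i j`, is strongly connected:
along an arc `i → j` every vector `v` dominating `w` has `v j / w j ≤ v i / w i`, and if the
vertices reachable from some vertex form a proper set `S`, shrinking `w` slightly on `S` gives a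
dominating vector that is not a multiple of `w`.

As `A` is reciprocal, `G(A, w)` is semicomplete, so it suffices to find two vertices of a strong
semicomplete digraph on `n ≥ 4` vertices whose deletion leaves it strong. Take a strong proper set
`S ∋ v` of maximal size. A vertex `x ∉ S` with arcs from and into `S` would give the strong set
`insert x S`, so either `S` misses a single vertex, which is then deletable and differs from `v`, or
there is no such `x`. In the latter case every outside vertex is entered from all of `S` or enters
all of `S`, and every vertex of `S` is deletable; `S = {v}` is impossible, as `v` lies on a
3-cycle. Running this from `v` and then from the deletable vertex found gives two.
-/

open Relation Function Set Filter Topology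

section Semicomplete

variable {ι : Type*} {r : ι → ι → Prop} {S : Set ι}

def inducedRel (S : Set ι) (r : ι → ι → Prop) (a b : ι) : Prop := a ∈ S ∧ b ∈ S ∧ r a b

def IsStrongOn (r : ι → ι → Prop) (S : Set ι) : Prop :=
  ∀ a ∈ S, ∀ b ∈ S, ReflTransGen (inducedRel S r) a b

def NoEar (r : ι → ι → Prop) (S : Set ι) : Prop :=
  ∀ x ∉ S, ∀ s ∈ S, r s x → ∀ t ∈ S, ¬ r x t

theorem inducedRel_swap : inducedRel S (swap r) = swap (inducedRel S r) := by
  ext a b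
  exact and_left_comm

theorem Relation.ReflTransGen.inducedRel_mono {S' : Set ι} {a b : ι} (hS : S ⊆ S')
    (h : ReflTransGen (inducedRel S r) a b) : ReflTransGen (inducedRel S' r) a b :=
  ReflTransGen.mono (fun _ _ ⟨ha, hb, hab⟩ => ⟨hS ha, hS hb, hab⟩) _ _ h

theorem Relation.ReflTransGen.exists_rel_into {x t : ι} (h : ReflTransGen r x t) (hx : x ∉ S)
    (ht : t ∈ S) : ∃ q ∉ S, (∃ s ∈ S, r q s) ∧ ReflTransGen (inducedRel Sᶜ r) x q := by
  induction h using ReflTransGen.head_induction_on with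
  | refl => exact absurd ht hx
  | @head x y hxy _ ih =>
    by_cases hy : y ∈ S
    · exact ⟨x, hx, ⟨y, hy, hxy⟩, .refl⟩
    · obtain ⟨q, hq, hqS, hyq⟩ := ih hy
      exact ⟨q, hq, hqS, .head ⟨hx, hy, hxy⟩ hyq⟩

theorem Relation.ReflTransGen.exists_rel_out {s z : ι} (h : ReflTransGen r s z) (hs : s ∈ S)
    (hz : z ∉ S) : ∃ s ∈ S, ∃ q ∉ S, r s q := by
  obtain ⟨q, hq, ⟨s, hs, hsq⟩, -⟩ := (reflTransGen_swap.2 h).exists_rel_into hz hs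
  exact ⟨s, hs, q, hq, hsq⟩

theorem isStrongOn_of_hub {c : ι} (hto : ∀ x ∈ S, ReflTransGen (inducedRel S r) x c)
    (hfrom : ∀ x ∈ S, ReflTransGen (inducedRel S r) c x) : IsStrongOn r S :=
  fun a ha b hb => (hto a ha).trans (hfrom b hb)

theorem isStrongOn_singleton (v : ι) : IsStrongOn r {v} := by
  rintro a rfl b rfl
  exact .refl

theorem IsStrongOn.insert_of_rel {s t x : ι} (hS : IsStrongOn r S) (hs : s ∈ S) (ht : t ∈ S)
    (hsx : r s x) (hxt : r x t) : IsStrongOn r (insert x S) := by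
  have hsub := subset_insert x S
  refine isStrongOn_of_hub (c := s) ?_ ?_ <;> rintro y (rfl | hy)
  · exact .head ⟨mem_insert y S, hsub ht, hxt⟩ ((hS t ht s hs).inducedRel_mono hsub)
  · exact (hS y hy s hs).inducedRel_mono hsub
  · exact .single ⟨hsub hs, mem_insert y S, hsx⟩
  · exact (hS s hs y hy).inducedRel_mono hsub

theorem isStrongOn_triangle {a b c : ι} (hab : r a b) (hbc : r b c) (hca : r c a) :
    IsStrongOn r {a, b, c} := by
  have hb : b ∈ ({a, b, c} : Set ι) := by simp
  have hc : c ∈ ({a, b, c} : Set ι) := by simp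
  have ea : ReflTransGen (inducedRel {a, b, c} r) a b := .single ⟨mem_insert a _, hb, hab⟩
  have eb : ReflTransGen (inducedRel {a, b, c} r) b c := .single ⟨hb, hc, hbc⟩
  have ec : ReflTransGen (inducedRel {a, b, c} r) c a := .single ⟨hc, mem_insert a _, hca⟩
  refine isStrongOn_of_hub (c := a) ?_ ?_ <;> rintro x (rfl | rfl | rfl)
  exacts [.refl, eb.trans ec, ec, .refl, ea, ea.trans eb]

theorem IsStrongOn.reflTransGen_subtype {p : ι → Prop} (h : IsStrongOn r {x | p x})
    (a b : Subtype p) : ReflTransGen (fun x y : Subtype p => r x y) a b := by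
  suffices ∀ b, ReflTransGen (inducedRel {x | p x} r) a b →
      ∀ hb : p b, ReflTransGen (fun x y : Subtype p => r x y) a ⟨b, hb⟩ from
    this b (h a a.2 b b.2) b.2
  intro b hab
  induction hab with
  | refl => exact fun _ => .refl
  | tail _ hcd ih => exact fun _ => (ih hcd.1).tail hcd.2.2

theorem IsStrongOn.exists_insert_of_not_noEar (hS : IsStrongOn r S) (h : ¬ NoEar r S) :
    ∃ x ∉ S, IsStrongOn r (insert x S) := by
  simp only [NoEar, not_forall, not_not] at h
  obtain ⟨x, hx, s, hs, hsx, t, ht, hxt⟩ := h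
  exact ⟨x, hx, hS.insert_of_rel hs ht hsx hxt⟩

namespace NoEar

theorem swap (hS : NoEar r S) : NoEar (swap r) S :=
  fun x hx s hs hxs t ht htx => hS x hx t ht htx s hs hxs

variable [Std.Total r]

theorem rel_of_rel_into (hS : NoEar r S) {q s t : ι} (hq : q ∉ S) (hs : s ∈ S) (hqs : r q s)
    (ht : t ∈ S) : r q t :=
  (total_of r q t).resolve_right fun htq => hS q hq t ht htq s hs hqs

theorem rel_of_rel_out (hS : NoEar r S) {q s t : ι} (hq : q ∉ S) (hs : s ∈ S) (hsq : r s q)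
    (ht : t ∈ S) : r t q :=
  (total_of r t q).resolve_right fun hqt => hS q hq s hs hsq t ht hqt

theorem reflTransGen_to (hr : ∀ a b, ReflTransGen r a b) (hS : NoEar r S) (hSu : S ≠ univ)
    {C : Set ι} (hC : Sᶜ ⊆ C) {t x : ι} (htS : t ∈ S) (htC : t ∈ C) (hxC : x ∈ C) :
    ReflTransGen (inducedRel C r) x t := by
  have from_outside : ∀ y ∉ S, ReflTransGen (inducedRel C r) y t := by
    intro y hy
    obtain ⟨q, hq, ⟨s, hs, hqs⟩, hyq⟩ := (hr y t).exists_rel_into hy htS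
    exact (hyq.inducedRel_mono hC).tail ⟨hC hq, htC, hS.rel_of_rel_into hq hs hqs htS⟩
  by_cases hx : x ∈ S
  · obtain ⟨z, hz⟩ := (ne_univ_iff_exists_notMem S).1 hSu
    obtain ⟨s, hs, q, hq, hsq⟩ := (hr x z).exists_rel_out hx hz
    exact .head ⟨hxC, hC hq, hS.rel_of_rel_out hq hs hsq hx⟩ (from_outside q hq)
  · exact from_outside x hx

theorem isStrongOn_compl_singleton (hr : ∀ a b, ReflTransGen r a b) (hS : NoEar r S)
    (hSu : S ≠ univ) {t₀ t₁ : ι} (ht₀ : t₀ ∈ S) (ht₁ : t₁ ∈ S) (hne : t₁ ≠ t₀) :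
    IsStrongOn r {t₀}ᶜ := by
  have hC : Sᶜ ⊆ {t₀}ᶜ := compl_subset_compl.2 (singleton_subset_iff.2 ht₀)
  refine isStrongOn_of_hub (c := t₁) (fun x hx => hS.reflTransGen_to hr hSu hC ht₁ hne hx)
    fun x hx => ?_
  have hr' : ∀ a b, ReflTransGen (Function.swap r) a b := fun a b => reflTransGen_swap.2 (hr b a)
  have := hS.swap.reflTransGen_to hr' hSu hC ht₁ hne hx
  rwa [inducedRel_swap, reflTransGen_swap] at this

theorem exists_isStrongOn_triangle (hr : ∀ a b, ReflTransGen r a b) {v : ι} (hv : NoEar r {v})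
    (hvu : ({v} : Set ι) ≠ univ) :
    ∃ a b, a ≠ v ∧ b ≠ v ∧ a ≠ b ∧ IsStrongOn r {v, a, b} := by
  obtain ⟨z, hz⟩ := (ne_univ_iff_exists_notMem _).1 hvu
  obtain ⟨s, hs, z', hz', hsz'⟩ := (hr v z).exists_rel_out (mem_singleton v) hz
  have hvz' : r v z' := mem_singleton_iff.1 hs ▸ hsz'
  obtain ⟨q, -, ⟨s', hs', hqs'⟩, hz'q⟩ := (hr z' v).exists_rel_into hz' (mem_singleton v)
  have hqv : r q v := mem_singleton_iff.1 hs' ▸ hqs'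
  -- on a path from `z'` (no arc to `v`) to `q` (an arc to `v`) avoiding `v`, some step `a → b`
  -- crosses from the first kind of vertex to the second
  have hz'v : ¬ r z' v := hv z' hz' v (mem_singleton v) hvz' v (mem_singleton v)
  obtain ⟨a, ha, ⟨b, hbv, ⟨ha', hb', hab⟩⟩, -⟩ :=
    hz'q.exists_rel_into (S := {y | r y v}) hz'v hqv
  refine ⟨a, b, ha', hb', fun h => ha (h ▸ hbv), isStrongOn_triangle ?_ hab hbv⟩
  exact (total_of r a v).resolve_left ha

end NoEar

theorem exists_isStrongOn_compl_singleton_ne_or_pair [Fintype ι] [Std.Total r]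
    (hr : ∀ a b, ReflTransGen r a b) (hcard : 4 ≤ Fintype.card ι) (v : ι) :
    (∃ i j, i ≠ j ∧ IsStrongOn r {i}ᶜ ∧ IsStrongOn r {j}ᶜ) ∨ ∃ y ≠ v, IsStrongOn r {y}ᶜ := by
  classical
  have small_ne_univ : ∀ T : Finset ι, T.card ≤ 3 → T ≠ Finset.univ := by
    rintro T hT rfl
    rw [Finset.card_univ] at hT
    omega
  set F := Finset.univ.filter fun T : Finset ι => v ∈ T ∧ T ≠ Finset.univ ∧ IsStrongOn r ↑T
  have mem_F : ∀ {T}, T ∈ F ↔ v ∈ T ∧ T ≠ Finset.univ ∧ IsStrongOn r ↑T := by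
    simp only [F, Finset.mem_filter, Finset.mem_univ, true_and, forall_const]
  have hvF : {v} ∈ F := mem_F.2 ⟨Finset.mem_singleton_self v, small_ne_univ {v} (by simp),
    by simpa using isStrongOn_singleton v⟩
  obtain ⟨S, hSF, hmax⟩ := F.exists_max_image Finset.card ⟨_, hvF⟩
  obtain ⟨hvS, hSu, hS⟩ := mem_F.1 hSF
  have hSu' : (S : Set ι) ≠ univ := by simpa using hSu
  by_cases hear : NoEar r S
  · by_cases hS1 : ∃ t ∈ S, t ≠ v
    · obtain ⟨t, htS, htv⟩ := hS1
      exact .inl ⟨t, v, htv, hear.isStrongOn_compl_singleton hr hSu' htS hvS htv.symm,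
        hear.isStrongOn_compl_singleton hr hSu' hvS htS htv⟩
    · have hSv : S = {v} := Finset.eq_singleton_iff_unique_mem.2 ⟨hvS, by simpa using hS1⟩
      rw [hSv, Finset.coe_singleton] at hear hSu'
      obtain ⟨a, b, hav, hbv, hab, htri⟩ := hear.exists_isStrongOn_triangle hr hSu'
      have hcard3 : ({v, a, b} : Finset ι).card = 3 := by
        rw [Finset.card_insert_of_notMem (by simp [hav.symm, hbv.symm]), Finset.card_pair hab]
      have := hmax {v, a, b} (mem_F.2 ⟨by simp, small_ne_univ _ hcard3.le, by simpa using htri⟩)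
      rw [hcard3, hSv, Finset.card_singleton] at this
      omega
  · obtain ⟨x, hx, hins⟩ := hS.exists_insert_of_not_noEar hear
    rw [Finset.mem_coe] at hx
    rw [← Finset.coe_insert] at hins
    by_cases hxu : insert x S = Finset.univ
    · refine .inr ⟨x, fun h => hx (h ▸ hvS), ?_⟩
      have : ({x}ᶜ : Set ι) = S := by
        ext y
        by_cases hy : y = x
        · simp [hy, hx]
        · simpa [hy] using Finset.ext_iff.1 hxu y
      rwa [this]
    · have := hmax (insert x S) (mem_F.2 ⟨Finset.mem_insert_of_mem hvS, hxu, hins⟩)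
      rw [Finset.card_insert_of_notMem hx] at this
      omega

theorem exists_pair_isStrongOn_compl_singleton [Fintype ι] [Std.Total r]
    (hr : ∀ a b, ReflTransGen r a b) (hcard : 4 ≤ Fintype.card ι) :
    ∃ i j, i ≠ j ∧ IsStrongOn r {i}ᶜ ∧ IsStrongOn r {j}ᶜ := by
  obtain ⟨v⟩ : Nonempty ι := Fintype.card_pos_iff.1 (by omega)
  obtain h | ⟨y, -, hy⟩ := exists_isStrongOn_compl_singleton_ne_or_pair hr hcard v
  · exact h
  obtain h | ⟨z, hzy, hz⟩ := exists_isStrongOn_compl_singleton_ne_or_pair hr hcard y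
  · exact h
  exact ⟨z, y, hzy, hz, hy⟩

end Semicomplete

section Efficiency

variable {ι : Type*} {A : Matrix ι ι ℝ} {w : ι → ℝ}

-- The digraph `G(A, w)` of Blanquero, Carrizosa and Conde.
def ratioRel (A : Matrix ι ι ℝ) (w : ι → ℝ) (i j : ι) : Prop := w i / w j ≤ A i j

theorem total_ratioRel (hA : IsReciprocal A) : Std.Total (ratioRel A w) := by
  refine ⟨fun i j => or_iff_not_imp_left.2 fun h => ?_⟩
  rw [ratioRel, not_le] at h
  rw [ratioRel, hA.2 i j, ← one_div_div (w i)]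
  exact one_div_le_one_div_of_le (hA.1 i j) h.le

theorem div_le_div_of_ratioRel {v : ι → ℝ} (hw : PosVec w) (hv : PosVec v)
    (hvw : ∀ i j, |A i j - v i / v j| ≤ |A i j - w i / w j|) {i j : ι}
    (hij : ratioRel A w i j) : v j / w j ≤ v i / w i := by
  have : w i / w j ≤ v i / v j := by
    have := (le_abs_self _).trans ((hvw i j).trans_eq (abs_of_nonneg (sub_nonneg.2 hij)))
    linarith
  rw [div_le_div_iff₀ (hw j) (hv j)] at this
  rw [div_le_div_iff₀ (hw j) (hw i)]
  linarith

theorem isEfficient_of_reflTransGen (hw : PosVec w) (h : ∀ a b, ReflTransGen (ratioRel A w) a b) :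
    IsEfficient A w := by
  refine ⟨hw, fun v hv hvw => ?_⟩
  have antitone : ∀ a b, ReflTransGen (ratioRel A w) a b → v b / w b ≤ v a / w a := by
    intro a b hab
    induction hab with
    | refl => exact le_rfl
    | tail _ hcd ih => exact (div_le_div_of_ratioRel hw hv hvw hcd).trans ih
  cases isEmpty_or_nonempty ι with
  | inl _ => exact ⟨1, one_pos, Subsingleton.elim _ _⟩
  | inr hne =>
    obtain ⟨a⟩ := hne
    refine ⟨v a / w a, div_pos (hv a) (hw a), funext fun b => ?_⟩
    have : v b / w b = v a / w a := le_antisymm (antitone a b (h a b)) (antitone b a (h b a))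
    rw [Pi.smul_apply, smul_eq_mul, ← this, div_mul_cancel₀ _ (hw b).ne']

theorem exists_scale_of_forall_not_ratioRel [Finite ι] (hw : PosVec w) {S : Set ι}
    (hS : ∀ i ∈ S, ∀ j ∉ S, ¬ ratioRel A w i j) :
    ∃ s, 0 < s ∧ s < 1 ∧ ∀ i ∈ S, ∀ j ∉ S, A i j ≤ s * (w i / w j) := by
  have hcut : ∀ i j, ∀ᶠ s in 𝓝[<] (1 : ℝ), i ∈ S → j ∉ S → A i j ≤ s * (w i / w j) := by
    intro i j
    by_cases hij : i ∈ S ∧ j ∉ S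
    · have hpos : 0 < w i / w j := div_pos (hw i) (hw j)
      have : A i j / (w i / w j) < 1 := (div_lt_one hpos).2 (not_le.1 (hS i hij.1 j hij.2))
      filter_upwards [Ioo_mem_nhdsLT this] with s hs _ _
      exact (div_le_iff₀ hpos).1 hs.1.le
    · exact .of_forall fun _ hi hj => absurd ⟨hi, hj⟩ hij
  obtain ⟨s, ⟨hs0, hs1⟩, hs⟩ := (Filter.Eventually.and (Ioo_mem_nhdsLT zero_lt_one)
    (eventually_all.2 fun i => eventually_all.2 (hcut i))).exists
  exact ⟨s, hs0, hs1, fun i hi j hj => hs i j hi hj⟩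

theorem not_isEfficient_of_forall_not_ratioRel [Finite ι] (hA : IsReciprocal A) (hw : PosVec w)
    {S : Set ι} (hS : ∀ i ∈ S, ∀ j ∉ S, ¬ ratioRel A w i j) {a b : ι} (ha : a ∈ S) (hb : b ∉ S) :
    ¬ IsEfficient A w := by
  classical
  obtain ⟨s, hs0, hs1, hsA⟩ := exists_scale_of_forall_not_ratioRel hw hS
  set v : ι → ℝ := fun i => if i ∈ S then s * w i else w i
  have hv : PosVec v := fun i => by by_cases hi : i ∈ S <;> simp [v, hi, hw i, hs0]
  -- shrinking `w` on `S` moves each ratio across the cut towards the matrix entry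
  have hvw : ∀ i j, |A i j - v i / v j| ≤ |A i j - w i / w j| := by
    intro i j
    have hpos : 0 < w i / w j := div_pos (hw i) (hw j)
    by_cases hi : i ∈ S <;> by_cases hj : j ∈ S
    · simp [v, hi, hj, mul_div_mul_left _ _ hs0.ne']
    · have hvij : v i / v j = s * (w i / w j) := by simp only [v, hi, hj, if_true, if_false]; ring
      rw [hvij]
      exact abs_sub_right_of_mem_uIcc
        (mem_uIcc.2 (.inr ⟨hsA i hi j hj, mul_le_of_le_one_left hpos.le hs1.le⟩))
    · have hvij : v i / v j = w i / w j / s := by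
        simp only [v, hi, hj, if_true, if_false]; ring
      have hA_le : w i / w j / s ≤ A i j := calc
        w i / w j / s = 1 / (s * (w j / w i)) := by field_simp [(hw i).ne', (hw j).ne']
        _ ≤ 1 / A j i := one_div_le_one_div_of_le (hA.1 j i) (hsA j hj i hi)
        _ = A i j := (hA.2 j i).symm
      rw [hvij]
      exact abs_sub_right_of_mem_uIcc
        (mem_uIcc.2 (.inl ⟨le_div_self hpos.le hs0 hs1.le, hA_le⟩))
    · simp [v, hi, hj]
  intro heff
  obtain ⟨c, -, hc⟩ := heff.2 v hv hvw
  have hb' : w b = c * w b := by simpa [v, hb] using congrFun hc b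
  have ha' : s * w a = c * w a := by simpa [v, ha] using congrFun hc a
  have hc1 : c = 1 := mul_right_cancel₀ (hw b).ne' (hb'.symm.trans (one_mul _).symm)
  exact hs1.ne (mul_right_cancel₀ (hw a).ne' (ha'.trans (by rw [hc1])))

theorem IsEfficient.reflTransGen_ratioRel [Finite ι] (hA : IsReciprocal A) (hw : IsEfficient A w)
    (a b : ι) : ReflTransGen (ratioRel A w) a b := by
  by_contra hab
  exact not_isEfficient_of_forall_not_ratioRel hA hw.1 (S := {i | ReflTransGen (ratioRel A w) a i})
    (fun i hi j hj hij => hj (hi.tail hij)) ReflTransGen.refl hab hw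

end Efficiency

theorem isEfficient_delMat {n : ℕ} {A : Matrix (Fin n) (Fin n) ℝ} {w : Fin n → ℝ} (hw : PosVec w)
    {k : Fin n} (h : IsStrongOn (ratioRel A w) {k}ᶜ) : IsEfficient (delMat A k) (delVec w k) :=
  isEfficient_of_reflTransGen (fun a => hw a) h.reflTransGen_subtype

/-- if `n ≥ 4` and `w` is efficient for the reciprocal matrix `A`, then there
are two distinct indices `i`, `j` with `w ∈ E(A; i) ∩ E(A; j)`. -/
theorem exists_two_efficient_deletions {n : ℕ} (hn : 4 ≤ n) (A : Matrix (Fin n) (Fin n) ℝ)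
    (hA : IsReciprocal A) (w : Fin n → ℝ) (hw : IsEfficient A w) :
    ∃ i j : Fin n, i ≠ j ∧ w ∈ EsetSub A i ∧ w ∈ EsetSub A j := by
  have := total_ratioRel hA (w := w)
  obtain ⟨i, j, hij, hi, hj⟩ := exists_pair_isStrongOn_compl_singleton
    (hw.reflTransGen_ratioRel hA) (by simpa using hn)
  exact ⟨i, j, hij, ⟨hw, isEfficient_delMat hw.1 hi⟩, ⟨hw, isEfficient_delMat hw.1 hj⟩⟩
end

section
/- Let A be an n-by-n reciprocal matrix with n > 2, and let w be a positive n-vector. If there exist i, j ∈ {1,…,n} with i ≠ j such that w(i) is efficient for A(i) and w(j) is efficient for A(j), then w is efficient for A. -/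
/-!
A vector `v` dominating `w` for `A` also dominates `w(i)` for `A(i)` and `w(j)` for `A(j)`,
so efficiency of the two deletions makes `v` proportional to `w` off `i` and off `j`.
Since `n > 2` the two index sets share an entry, which forces the two proportionality
constants to agree, and the two sets cover all indices.
-/

section

variable {ι : Type*} {A : Matrix ι ι ℝ} {v w : ι → ℝ}

theorem IsEfficient.exists_eq_smul_on_of_submatrix {p : ι → Prop}
    (h : IsEfficient (A.submatrix (Subtype.val : Subtype p → ι) Subtype.val)
      (w ∘ Subtype.val))
    (hv : PosVec v) (hvw : ∀ a b, |A a b - v a / v b| ≤ |A a b - w a / w b|) :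
    ∃ c : ℝ, 0 < c ∧ ∀ a, p a → v a = c * w a := by
  obtain ⟨c, hc, hvc⟩ := h.2 (v ∘ Subtype.val) (fun a => hv a) (fun a b => hvw a b)
  exact ⟨c, hc, fun a ha => congrFun hvc ⟨a, ha⟩⟩

theorem eq_smul_of_eq_smul_off_of_eq_smul_off {i j k : ι} {c d : ℝ} (hij : i ≠ j)
    (hki : k ≠ i) (hkj : k ≠ j) (hwk : w k ≠ 0)
    (hc : ∀ m, m ≠ i → v m = c * w m) (hd : ∀ m, m ≠ j → v m = d * w m) :
    v = c • w := by
  have hcd : c = d := mul_right_cancel₀ hwk ((hc k hki).symm.trans (hd k hkj))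
  funext m
  by_cases hmi : m = i
  · subst hmi
    simpa [hcd] using hd m hij
  · exact hc m hmi

end

theorem posVec_of_delVec_of_delVec {n : ℕ} {w : Fin n → ℝ} {i j : Fin n} (hij : i ≠ j)
    (hi : PosVec (delVec w i)) (hj : PosVec (delVec w j)) : PosVec w := fun m => by
  by_cases hmi : m = i
  · subst hmi
    exact hj ⟨m, hij⟩
  · exact hi ⟨m, hmi⟩

theorem efficient_of_two_efficient_deletions_general {n : ℕ} (hn : 2 < n)
    (A : Matrix (Fin n) (Fin n) ℝ) (w : Fin n → ℝ)
    (i j : Fin n) (hij : i ≠ j)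
    (hi : IsEfficient (delMat A i) (delVec w i))
    (hj : IsEfficient (delMat A j) (delVec w j)) :
    IsEfficient A w := by
  have hw : PosVec w := posVec_of_delVec_of_delVec hij hi.1 hj.1
  refine ⟨hw, fun v hv hvw => ?_⟩
  obtain ⟨c, hc, hvc⟩ := hi.exists_eq_smul_on_of_submatrix hv hvw
  obtain ⟨d, -, hvd⟩ := hj.exists_eq_smul_on_of_submatrix hv hvw
  obtain ⟨k, hki, hkj⟩ := Fin.exists_ne_and_ne_of_two_lt i j hn
  exact ⟨c, hc, eq_smul_of_eq_smul_off_of_eq_smul_off hij hki hkj (hw k).ne' hvc hvd⟩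

/-- for `n > 2`, if `w(i)` is efficient for `A(i)` and `w(j)` is efficient for
`A(j)` for two distinct indices `i ≠ j`, then `w` is efficient for `A`. -/
theorem efficient_of_two_efficient_deletions {n : ℕ} (hn : 2 < n)
    (A : Matrix (Fin n) (Fin n) ℝ) (hA : IsReciprocal A) (w : Fin n → ℝ) (hw : PosVec w)
    (i j : Fin n) (hij : i ≠ j)
    (hi : IsEfficient (delMat A i) (delVec w i))
    (hj : IsEfficient (delMat A j) (delVec w j)) :
    IsEfficient A w :=
  efficient_of_two_efficient_deletions_general hn A w i j hij hi hj
end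

section
/- Let A be an n-by-n reciprocal matrix with n ≥ 4, and let i, j ∈ {1,…,n} with i ≠ j. Then there exists an efficient vector w for A such that w(i) is efficient for A(i) and w(j) is efficient for A(j). -/
/-- Any column of a reciprocal matrix is efficient. -/
lemma col_efficient {ι : Type*} (A : Matrix ι ι ℝ) (hA : IsReciprocal A) (k : ι) :
    IsEfficient A (fun a => A a k) := by
  obtain ⟨hpos, hrec⟩ := hA
  have hkk : A k k = 1 := by
    have h := hrec k k
    have h2 := hpos k k
    have h3 : A k k * A k k = 1 := by
      field_simp at h
      nlinarith
    nlinarith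
  refine ⟨fun a => hpos a k, ?_⟩
  intro v hv hle
  refine ⟨v k, hv k, ?_⟩
  funext a
  have h := hle a k
  simp only [hkk, div_one, sub_self, abs_zero] at h
  have h0 : |A a k - v a / v k| = 0 := le_antisymm h (abs_nonneg _)
  have h1 : A a k = v a / v k := by
    have := abs_eq_zero.mp h0
    linarith
  have hk := hv k
  have : v a = A a k * v k := by field_simp at h1 ⊢; linarith [h1]
  simp [this, mul_comm]

/-- for `n ≥ 4` and any two distinct indices `i ≠ j`, there is an efficient
vector `w` for `A` such that `w(i)` is efficient for `A(i)` and `w(j)` is efficient for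
`A(j)`. -/
theorem exists_efficient_with_two_efficient_deletions {n : ℕ} (hn : 4 ≤ n)
    (A : Matrix (Fin n) (Fin n) ℝ) (hA : IsReciprocal A) (i j : Fin n) (hij : i ≠ j) :
    ∃ w : Fin n → ℝ, IsEfficient A w ∧ IsEfficient (delMat A i) (delVec w i) ∧
      IsEfficient (delMat A j) (delVec w j) := by
  obtain ⟨k, hk⟩ : ∃ k : Fin n, k ∉ ({i, j} : Finset (Fin n)) := by
    by_contra h
    push_neg at h
    have hsub : (Finset.univ : Finset (Fin n)) ⊆ {i, j} := fun x _ => h x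
    have := Finset.card_le_card hsub
    have h2 : ({i, j} : Finset (Fin n)).card ≤ 2 := Finset.card_insert_le _ _ |>.trans (by simp)
    simp [Finset.card_univ] at this
    omega
  simp only [Finset.mem_insert, Finset.mem_singleton, not_or] at hk
  obtain ⟨hki, hkj⟩ := hk
  refine ⟨fun a => A a k, col_efficient A hA k, ?_, ?_⟩
  · have hrec : IsReciprocal (delMat A i) :=
      ⟨fun a b => hA.1 a.1 b.1, fun a b => hA.2 a.1 b.1⟩
    have := col_efficient (delMat A i) hrec ⟨k, hki⟩
    exact this
  · have hrec : IsReciprocal (delMat A j) :=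
      ⟨fun a b => hA.1 a.1 b.1, fun a b => hA.2 a.1 b.1⟩
    have := col_efficient (delMat A j) hrec ⟨k, hkj⟩
    exact this
end
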